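/- arXiv:1912.00621 — 4 statements merged into one kernel-verified Lean document; each statement's English description precedes it below -/
import Mathlib

section
/- Let C be a Krull-Schmidt, K-linear extriangulated category (K a field) with dim_K Hom_C(X,Y) < ∞ and dim_K E(X,Y) < ∞ for all X,Y ∈ C, and let X ∈ Ind(C). Then S(X) is a directed ordered set under the relation >: (i) if s > t and t > s then s ∼ t; (ii) if s > t and t > u then s > u; (iii) for any s, t ∈ S(X) there exists u ∈ S(X) with s > u and t > u. The dual statements hold for S'(X) with its relation >. -/
open CategoryTheory CategoryTheory.Limits Opposite ZeroObject

attribute [local instance] CategoryTheory.Limits.hasBinaryBiproducts_of_finite_biproducts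

universe w v u

noncomputable section

/-- An object of a preadditive category with finite biproducts is *indecomposable* if it is
nonzero and admits no nontrivial direct sum decomposition. -/
def Indec {C : Type u} [Category.{v} C] [Preadditive C] [HasFiniteBiproducts C] (X : C) : Prop :=
  ¬ IsZero X ∧ ∀ (Y Z : C), Nonempty (X ≅ Y ⊞ Z) → IsZero Y ∨ IsZero Z

/-- A preadditive category is *Krull-Schmidt* if every object is (isomorphic to) a finite
biproduct of objects having local endomorphism rings. -/
def IsKrullSchmidt (C : Type u) [Category.{v} C] [Preadditive C] [HasFiniteBiproducts C] : Prop :=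
  ∀ X : C, ∃ (n : ℕ) (f : Fin n → C),
    (∀ i, IsLocalRing (CategoryTheory.End (f i))) ∧ Nonempty (X ≅ ⨁ f)

/-- `C` is *locally finite*: for every indecomposable `A` there are, up to isomorphism, only
finitely many indecomposables `B` with `Hom(A, B) ≠ 0`, and only finitely many indecomposables
`B` with `Hom(B, A) ≠ 0`. -/
def LocFinite (C : Type u) [Category.{v} C] [Preadditive C] [HasFiniteBiproducts C] : Prop :=
  ∀ A : C, Indec A →
    (∃ (n : ℕ) (ind : Fin n → C), ∀ B : C, Indec B → (∃ φ : A ⟶ B, φ ≠ 0) →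
        ∃ i, Nonempty (B ≅ ind i)) ∧
    (∃ (n : ℕ) (ind : Fin n → C), ∀ B : C, Indec B → (∃ φ : B ⟶ A, φ ≠ 0) →
        ∃ i, Nonempty (B ≅ ind i))

section ExtCatDef

variable (K : Type w) [Field K]
variable (C : Type u) [Category.{v} C] [Preadditive C] [Linear K C] [HasFiniteBiproducts C]

/-- An extriangulated structure (in the sense of Nakaoka–Palu) on the `K`-linear category `C`,
with `K`-linear extension groups: a biadditive functor `E : Cᵒᵖ × C → Ab` (here landing in
`K`-modules, recording the `K`-linear structure on the extension groups) together with an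
additive realization `real` of extensions by conflations, satisfying (ET1)–(ET4) and their
duals. -/
structure ExtCat where
  /-- the biadditive functor `E : Cᵒᵖ × C → Ab`. -/
  E : Cᵒᵖ ⥤ C ⥤ ModuleCat.{v} K
  additive₁ : E.Additive
  additive₂ : ∀ c : Cᵒᵖ, (E.obj c).Additive
  /-- `real x y δ` says that the sequence `x, y` realizes the extension `δ`, i.e.
  `(x, y, δ)` is an `E`-triangle. -/
  real : ∀ {a b c : C}, (a ⟶ b) → (b ⟶ c) → ((E.obj (op c)).obj a) → Prop
  /-- every extension is realized by some conflation. -/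
  real_exists : ∀ {a c : C} (δ : (E.obj (op c)).obj a),
    ∃ (b : C) (x : a ⟶ b) (y : b ⟶ c), real x y δ
  /-- the realization is well defined on equivalence classes of sequences. -/
  real_congr : ∀ {a b b' c : C} {x : a ⟶ b} {y : b ⟶ c} {x' : a ⟶ b'} {y' : b' ⟶ c}
    {δ : (E.obj (op c)).obj a} (e : b ≅ b'),
      x ≫ e.hom = x' → e.hom ≫ y' = y → real x y δ → real x' y' δ
  /-- any two realizations of the same extension are equivalent sequences. -/
  real_unique : ∀ {a b b' c : C} {x : a ⟶ b} {y : b ⟶ c} {x' : a ⟶ b'} {y' : b' ⟶ c}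
    {δ : (E.obj (op c)).obj a}, real x y δ → real x' y' δ →
      ∃ e : b ≅ b', x ≫ e.hom = x' ∧ e.hom ≫ y' = y
  /-- (ET2) realization of morphisms of extensions: if `f_* δ = g^* δ'` then `(f, g)` extends to
  a morphism of the realizing `E`-triangles. -/
  real_lift : ∀ {a b c a' b' c' : C} {x : a ⟶ b} {y : b ⟶ c} {x' : a' ⟶ b'} {y' : b' ⟶ c'}
    {δ : (E.obj (op c)).obj a} {δ' : (E.obj (op c')).obj a'} (f : a ⟶ a') (g : c ⟶ c'),
      real x y δ → real x' y' δ' →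
      ((E.obj (op c)).map f) δ = ((E.map g.op).app a') δ' →
      ∃ m : b ⟶ b', x ≫ m = f ≫ x' ∧ m ≫ y' = y ≫ g
  /-- the realization is additive, part (i): split extensions are realized by split sequences. -/
  real_zero : ∀ a c : C,
    real (biprod.inl : a ⟶ a ⊞ c) (biprod.snd : a ⊞ c ⟶ c) (0 : (E.obj (op c)).obj a)
  /-- the realization is additive, part (ii): it commutes with direct sums. -/
  real_sum : ∀ {a b c a' b' c' : C} {x : a ⟶ b} {y : b ⟶ c} {x' : a' ⟶ b'} {y' : b' ⟶ c'}
    {δ : (E.obj (op c)).obj a} {δ' : (E.obj (op c')).obj a'},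
      real x y δ → real x' y' δ' →
      real (biprod.map x x') (biprod.map y y')
        (((E.map (biprod.fst : c ⊞ c' ⟶ c).op).app (a ⊞ a'))
            (((E.obj (op c)).map (biprod.inl : a ⟶ a ⊞ a')) δ) +
         ((E.map (biprod.snd : c ⊞ c' ⟶ c').op).app (a ⊞ a'))
            (((E.obj (op c')).map (biprod.inr : a' ⟶ a ⊞ a')) δ'))
  /-- (ET3). -/
  et3 : ∀ {a b c a' b' c' : C} {x : a ⟶ b} {y : b ⟶ c} {x' : a' ⟶ b'} {y' : b' ⟶ c'}
    {δ : (E.obj (op c)).obj a} {δ' : (E.obj (op c')).obj a'} (f : a ⟶ a') (m : b ⟶ b'),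
      real x y δ → real x' y' δ' → x ≫ m = f ≫ x' →
      ∃ g : c ⟶ c', y ≫ g = m ≫ y' ∧ ((E.obj (op c)).map f) δ = ((E.map g.op).app a') δ'
  /-- (ET3)ᵒᵖ. -/
  et3op : ∀ {a b c a' b' c' : C} {x : a ⟶ b} {y : b ⟶ c} {x' : a' ⟶ b'} {y' : b' ⟶ c'}
    {δ : (E.obj (op c)).obj a} {δ' : (E.obj (op c')).obj a'} (g : c ⟶ c') (m : b ⟶ b'),
      real x y δ → real x' y' δ' → m ≫ y' = y ≫ g →
      ∃ f : a ⟶ a', x ≫ m = f ≫ x' ∧ ((E.obj (op c)).map f) δ = ((E.map g.op).app a') δ'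
  /-- (ET4). -/
  et4 : ∀ {A B D F G : C} {f : A ⟶ B} {f' : B ⟶ D} {g : B ⟶ G} {g' : G ⟶ F}
    {δ : (E.obj (op D)).obj A} {δ' : (E.obj (op F)).obj B},
      real f f' δ → real g g' δ' →
      ∃ (Eo : C) (d : D ⟶ Eo) (e : Eo ⟶ F) (h' : G ⟶ Eo) (δ'' : (E.obj (op Eo)).obj A),
        real (f ≫ g) h' δ'' ∧ f' ≫ d = g ≫ h' ∧ h' ≫ e = g' ∧
        real d e (((E.obj (op F)).map f') δ') ∧
        ((E.map d.op).app A) δ'' = δ ∧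
        ((E.obj (op Eo)).map f) δ'' = ((E.map e.op).app B) δ'
  /-- (ET4)ᵒᵖ. -/
  et4op : ∀ {A B D F Cc : C} {f' : D ⟶ A} {f : A ⟶ B} {g' : F ⟶ B} {g : B ⟶ Cc}
    {δ : (E.obj (op B)).obj D} {δ' : (E.obj (op Cc)).obj F},
      real f' f δ → real g' g δ' →
      ∃ (Eo : C) (d : D ⟶ Eo) (e : Eo ⟶ F) (h' : Eo ⟶ A) (δ'' : (E.obj (op Cc)).obj Eo),
        real h' (f ≫ g) δ'' ∧ d ≫ h' = f' ∧ h' ≫ f = e ≫ g' ∧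
        real d e (((E.map g'.op).app D) δ) ∧
        ((E.obj (op Cc)).map e) δ'' = δ' ∧
        ((E.obj (op B)).map d) δ = ((E.map g.op).app Eo) δ''

end ExtCatDef

namespace ExtCat

variable {K : Type w} [Field K]
variable {C : Type u} [Category.{v} C] [Preadditive C] [Linear K C] [HasFiniteBiproducts C]
variable (ξ : ExtCat K C)

/-- The extension group `E(c, a)`. -/
abbrev Ext (c a : C) : Type v := (ξ.E.obj (op c)).obj a

/-- Pushforward `f_* : E(c, a) → E(c, a')` along `f : a ⟶ a'`. -/
def push (c : C) {a a' : C} (f : a ⟶ a') (δ : ξ.Ext c a) : ξ.Ext c a' :=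
  ((ξ.E.obj (op c)).map f) δ

/-- Pullback `g^* : E(c, a) → E(c', a)` along `g : c' ⟶ c`. -/
def pull (a : C) {c c' : C} (g : c' ⟶ c) (δ : ξ.Ext c a) : ξ.Ext c' a :=
  ((ξ.E.map g.op).app a) δ

/-- An object `P` is projective if `E(P, A) = 0` for all `A`. -/
def ProjObj (P : C) : Prop := ∀ (A : C) (δ : ξ.Ext P A), δ = 0

/-- An object `I` is injective if `E(A, I) = 0` for all `A`. -/
def InjObj (I : C) : Prop := ∀ (A : C) (δ : ξ.Ext A I), δ = 0

end ExtCat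

section STermDefs

variable {K : Type w} [Field K]
variable {C : Type u} [Category.{v} C] [Preadditive C] [HasFiniteBiproducts C]

/-- An element of the set `S(X)`: a non-split `E`-triangle `A ⟶ B ⟶ X` ending at `X`
whose first term `A` is indecomposable. -/
structure STerm (ξ : ExtCat K C) (X : C) where
  A : C
  B : C
  f : A ⟶ B
  g : B ⟶ X
  δ : ξ.Ext X A
  isReal : ξ.real f g δ
  nonsplit : δ ≠ 0
  indec : Indec A

/-- `s > t` in `S(X)`: there is `f : A_s ⟶ A_t` with `f_* δ_s = δ_t`, i.e. a morphism of
`E`-triangles from `s` to `t` restricting to the identity on `X`. -/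
def STerm.Gt {ξ : ExtCat K C} {X : C} (s t : STerm ξ X) : Prop :=
  ∃ f : s.A ⟶ t.A, ξ.push X f s.δ = t.δ

/-- `s ∼ t` in `S(X)`: such an `f` can be chosen to be an isomorphism. -/
def STerm.Sim {ξ : ExtCat K C} {X : C} (s t : STerm ξ X) : Prop :=
  ∃ f : s.A ⟶ t.A, IsIso f ∧ ξ.push X f s.δ = t.δ

/-- An element of the set `S'(X)`: a non-split `E`-triangle `X ⟶ B ⟶ A` starting at `X`
whose last term `A` is indecomposable. -/
structure SPrimeTerm (ξ : ExtCat K C) (X : C) where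
  A : C
  B : C
  f : X ⟶ B
  g : B ⟶ A
  δ : ξ.Ext A X
  isReal : ξ.real f g δ
  nonsplit : δ ≠ 0
  indec : Indec A

/-- `s > t` in `S'(X)`: there is `f : A_t ⟶ A_s` with `f^* δ_s = δ_t`. -/
def SPrimeTerm.Gt {ξ : ExtCat K C} {X : C} (s t : SPrimeTerm ξ X) : Prop :=
  ∃ f : t.A ⟶ s.A, ξ.pull X f s.δ = t.δ

/-- `s ∼ t` in `S'(X)`: such an `f` can be chosen to be an isomorphism. -/
def SPrimeTerm.Sim {ξ : ExtCat K C} {X : C} (s t : SPrimeTerm ξ X) : Prop :=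
  ∃ f : t.A ⟶ s.A, IsIso f ∧ ξ.pull X f s.δ = t.δ

end STermDefs


/-!
Indecomposable objects of a Krull–Schmidt category have local endomorphism rings. If
`f_* δ_s = δ_t` and `g_* δ_t = δ_s`, then `(f ≫ g)_*` fixes `δ_s ≠ 0`, so `1 - f ≫ g` is not
invertible and hence `f ≫ g` is; likewise `g ≫ f`, so `f` is an isomorphism. Transitivity is
functoriality of `E`.

For directedness, (ET4)ᵒᵖ applied to `s ⊕ t` and the split conflation `X → X ⊕ X → X` makes
`[g_s g_t] : B_s ⊕ B_t → X` a deflation with some class `ρ`. Since `End X` is local and neither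
`g_s` nor `g_t` is a split epimorphism, `ρ ≠ 0`, while `g_s^* ρ = g_t^* ρ = 0`. Pushing `ρ` to a
suitable indecomposable summand keeps it nonzero, and by exactness of
`C(A_s, -) → E(X, -) → E(B_s, -)` the resulting element of `S(X)` lies below both `s` and `t`.
The statements for `S'(X)` are dual.
-/

namespace CategoryTheory

variable {C : Type u} [Category.{v} C]

theorem isSplitEpi_of_isIso_comp {X Y Z : C} (f : X ⟶ Y) (g : Y ⟶ Z) [IsIso (f ≫ g)] :
    IsSplitEpi g :=
  .mk' ⟨inv (f ≫ g) ≫ f, by rw [Category.assoc, IsIso.inv_hom_id]⟩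

theorem isSplitMono_of_isIso_comp {X Y Z : C} (f : X ⟶ Y) (g : Y ⟶ Z) [IsIso (f ≫ g)] :
    IsSplitMono f :=
  .mk' ⟨g ≫ inv (f ≫ g), by rw [← Category.assoc, IsIso.hom_inv_id]⟩

theorem isIso_of_isIso_comp_of_isIso_comp {X Y : C} (f : X ⟶ Y) (g : Y ⟶ X) [IsIso (f ≫ g)]
    [IsIso (g ≫ f)] : IsIso f := by
  have := isSplitMono_of_isIso_comp f g
  have := isSplitEpi_of_isIso_comp g f
  exact isIso_of_mono_of_isSplitEpi f

section Preadditive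

variable [Preadditive C]

def Iso.conjRingEquiv {X Y : C} (α : X ≅ Y) : End X ≃+* End Y :=
  { α.conj with
    map_add' := fun f g => (α.inv ≫= Preadditive.add_comp _ _ _ f g α.hom).trans
      (Preadditive.comp_add _ _ _ _ _ _) }

theorem isLocalRing_end_of_iso {X Y : C} (α : X ≅ Y) [IsLocalRing (End Y)] :
    IsLocalRing (End X) :=
  (α.conjRingEquiv : End X →+* End Y).domain_isLocalRing

theorem isSplitEpi_or_isSplitEpi_of_biprod_desc [HasBinaryBiproducts C] {X Y Z : C}
    [IsLocalRing (End X)] (a : Y ⟶ X) (b : Z ⟶ X) [IsSplitEpi (biprod.desc a b)] :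
    IsSplitEpi a ∨ IsSplitEpi b := by
  obtain ⟨⟨σ, hσ⟩⟩ := IsSplitEpi.exists_splitEpi (f := biprod.desc a b)
  have hsum : (σ ≫ biprod.fst) ≫ a + (σ ≫ biprod.snd) ≫ b = 𝟙 X := by
    simpa only [biprod.desc_eq, Preadditive.comp_add, Category.assoc] using hσ
  refine (IsLocalRing.isUnit_or_isUnit_of_add_one (R := End X) hsum).imp
    (fun hu => ?_) (fun hu => ?_)
  · have := (isUnit_iff_isIso _).1 hu
    exact isSplitEpi_of_isIso_comp (σ ≫ biprod.fst) a
  · have := (isUnit_iff_isIso _).1 hu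
    exact isSplitEpi_of_isIso_comp (σ ≫ biprod.snd) b

theorem isSplitMono_or_isSplitMono_of_biprod_lift [HasBinaryBiproducts C] {X Y Z : C}
    [IsLocalRing (End X)] (a : X ⟶ Y) (b : X ⟶ Z) [IsSplitMono (biprod.lift a b)] :
    IsSplitMono a ∨ IsSplitMono b := by
  obtain ⟨⟨r, hr⟩⟩ := IsSplitMono.exists_splitMono (f := biprod.lift a b)
  have hsum : a ≫ biprod.inl ≫ r + b ≫ biprod.inr ≫ r = 𝟙 X := by
    simpa only [biprod.lift_eq, Preadditive.add_comp, Category.assoc] using hr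
  refine (IsLocalRing.isUnit_or_isUnit_of_add_one (R := End X) hsum).imp
    (fun hu => ?_) (fun hu => ?_)
  · have := (isUnit_iff_isIso _).1 hu
    exact isSplitMono_of_isIso_comp a (biprod.inl ≫ r)
  · have := (isUnit_iff_isIso _).1 hu
    exact isSplitMono_of_isIso_comp b (biprod.inr ≫ r)

theorem id_eq_sum_of_iso_biproduct {J : Type} [Fintype J] {f : J → C} [HasBiproduct f] {W : C}
    (φ : W ≅ ⨁ f) : 𝟙 W = ∑ i, (φ.hom ≫ biproduct.π f i) ≫ biproduct.ι f i ≫ φ.inv := by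
  calc 𝟙 W = φ.hom ≫ 𝟙 (⨁ f) ≫ φ.inv := by simp
    _ = _ := by
      rw [← biproduct.total, Preadditive.sum_comp, Preadditive.comp_sum]
      simp only [Category.assoc]

end Preadditive

end CategoryTheory

theorem IsLocalRing.eq_zero_or_eq_zero_of_add_eq_one {R : Type*} [Ring R] [IsLocalRing R]
    {p q : R} (h : p + q = 1) (hpq : p * q = 0) (hqp : q * p = 0) : p = 0 ∨ q = 0 :=
  (IsLocalRing.isUnit_or_isUnit_of_add_one h).symm.imp (fun hq => hq.mul_left_eq_zero.1 hpq)
    fun hp => hp.mul_left_eq_zero.1 hqp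

section KrullSchmidt

variable {C : Type u} [Category.{v} C] [Preadditive C] [HasFiniteBiproducts C]

theorem indec_of_isLocalRing_end {X : C} [IsLocalRing (End X)] : Indec X := by
  refine ⟨fun hX => one_ne_zero (α := End X) (hX.eq_of_src (𝟙 X) 0), fun Y Z ⟨ψ⟩ => ?_⟩
  let p : End X := ψ.hom ≫ biprod.fst ≫ biprod.inl ≫ ψ.inv
  let q : End X := ψ.hom ≫ biprod.snd ≫ biprod.inr ≫ ψ.inv
  have hsum : p + q = 1 := by
    rw [End.one_def, ← ψ.hom_inv_id, ← Category.id_comp ψ.inv, ← biprod.total]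
    simp only [Preadditive.add_comp, Preadditive.comp_add, Category.assoc]
    rfl
  refine (IsLocalRing.eq_zero_or_eq_zero_of_add_eq_one hsum (by simp [p, q, End.mul_def])
    (by simp [p, q, End.mul_def])).imp (fun hp => ?_) (fun hq => ?_)
  · rw [IsZero.iff_id_eq_zero]
    calc 𝟙 Y = biprod.inl ≫ ψ.inv ≫ p ≫ ψ.hom ≫ biprod.fst := by simp [p]
      _ = 0 := by rw [hp]; simp
  · rw [IsZero.iff_id_eq_zero]
    calc 𝟙 Z = biprod.inr ≫ ψ.inv ≫ q ≫ ψ.hom ≫ biprod.snd := by simp [q]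
      _ = 0 := by rw [hq]; simp

def biproductFinSuccIso {n : ℕ} (f : Fin (n + 1) → C) :
    (⨁ f) ≅ f 0 ⊞ ⨁ (fun i : Fin n => f i.succ) where
  hom := biprod.lift (biproduct.π f 0) (biproduct.lift fun i => biproduct.π f i.succ)
  inv := biprod.desc (biproduct.ι f 0) (biproduct.desc fun i => biproduct.ι f i.succ)
  hom_inv_id := by
    rw [biprod.lift_desc, biproduct.lift_desc, ← biproduct.total, Fin.sum_univ_succ]
  inv_hom_id := by
    apply biprod.hom_ext' <;> apply biprod.hom_ext
    · simp
    · apply biproduct.hom_ext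
      intro j
      simp [Ne.symm (Fin.succ_ne_zero j)]
    · apply biproduct.hom_ext'
      intro j
      simp [Fin.succ_ne_zero j]
    · apply biproduct.hom_ext'
      intro j
      apply biproduct.hom_ext
      intro k
      simp [biproduct.ι_π]

theorem exists_iso_of_indec_of_iso_biproduct {n : ℕ} (f : Fin n → C) {X : C} (hX : Indec X)
    (φ : X ≅ ⨁ f) : ∃ i, Nonempty (X ≅ f i) := by
  induction n generalizing X with
  | zero =>
    exact absurd (IsZero.of_iso ((IsZero.iff_id_eq_zero _).2
      (biproduct.hom_ext _ _ fun i => i.elim0)) φ) hX.1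
  | succ n ih =>
    let ψ := φ ≪≫ biproductFinSuccIso f
    rcases hX.2 _ _ ⟨ψ⟩ with h0 | hrest
    · obtain ⟨i, ⟨e⟩⟩ := ih (fun i => f i.succ) hX (ψ ≪≫ (isoZeroBiprod h0).symm)
      exact ⟨i.succ, ⟨e⟩⟩
    · exact ⟨0, ⟨ψ ≪≫ (isoBiprodZero hrest).symm⟩⟩

theorem isLocalRing_end_of_indec (hKS : IsKrullSchmidt C) {X : C} (hX : Indec X) :
    IsLocalRing (End X) := by
  obtain ⟨n, f, hloc, ⟨φ⟩⟩ := hKS X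
  obtain ⟨i, ⟨e⟩⟩ := exists_iso_of_indec_of_iso_biproduct f hX φ
  have := hloc i
  exact isLocalRing_end_of_iso e

end KrullSchmidt

namespace ExtCat

variable {K : Type w} [Field K] {C : Type u} [Category.{v} C] [Preadditive C]
  [HasFiniteBiproducts C] (ξ : ExtCat K C)

@[simp]
lemma push_id (c : C) {a : C} (δ : ξ.Ext c a) : ξ.push c (𝟙 a) δ = δ := by
  simp [push]

lemma push_comp (c : C) {a a' a'' : C} (f : a ⟶ a') (g : a' ⟶ a'') (δ : ξ.Ext c a) :
    ξ.push c (f ≫ g) δ = ξ.push c g (ξ.push c f δ) := by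
  simp [push]

@[simp]
lemma push_zero (c : C) {a a' : C} (f : a ⟶ a') : ξ.push c f 0 = 0 := by
  simp [push]

lemma push_sub (c : C) {a a' : C} (f g : a ⟶ a') (δ : ξ.Ext c a) :
    ξ.push c (f - g) δ = ξ.push c f δ - ξ.push c g δ := by
  have := ξ.additive₂ (op c)
  simp [push]

lemma push_sum (c : C) {a a' : C} {ι : Type*} (s : Finset ι) (f : ι → (a ⟶ a'))
    (δ : ξ.Ext c a) : ξ.push c (∑ i ∈ s, f i) δ = ∑ i ∈ s, ξ.push c (f i) δ := by
  have := ξ.additive₂ (op c)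
  simp [push]

@[simp]
lemma pull_id (a : C) {c : C} (δ : ξ.Ext c a) : ξ.pull a (𝟙 c) δ = δ := by
  simp [pull]

lemma pull_comp (a : C) {c c' c'' : C} (f : c'' ⟶ c') (g : c' ⟶ c) (δ : ξ.Ext c a) :
    ξ.pull a (f ≫ g) δ = ξ.pull a f (ξ.pull a g δ) := by
  simp [pull]

@[simp]
lemma pull_zero (a : C) {c c' : C} (g : c' ⟶ c) : ξ.pull a g 0 = 0 := by
  simp [pull]

@[simp]
lemma pull_zero_hom (a : C) {c c' : C} (δ : ξ.Ext c a) : ξ.pull a (0 : c' ⟶ c) δ = 0 := by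
  have := ξ.additive₁
  simp [pull]

lemma pull_sub (a : C) {c c' : C} (f g : c' ⟶ c) (δ : ξ.Ext c a) :
    ξ.pull a (f - g) δ = ξ.pull a f δ - ξ.pull a g δ := by
  have := ξ.additive₁
  simp [pull]

lemma pull_sum (a : C) {c c' : C} {ι : Type*} (s : Finset ι) (g : ι → (c' ⟶ c))
    (δ : ξ.Ext c a) : ξ.pull a (∑ i ∈ s, g i) δ = ∑ i ∈ s, ξ.pull a (g i) δ := by
  have := ξ.additive₁
  simp [pull]

lemma pull_push {a a' c c' : C} (f : a ⟶ a') (g : c' ⟶ c) (δ : ξ.Ext c a) :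
    ξ.pull a' g (ξ.push c f δ) = ξ.push c' f (ξ.pull a g δ) :=
  LinearMap.congr_fun (congrArg ModuleCat.Hom.hom ((ξ.E.map g.op).naturality f)) δ


lemma eq_zero_of_push_eq_zero {a a' c : C} (f : a ⟶ a') [IsIso f] {δ : ξ.Ext c a}
    (h : ξ.push c f δ = 0) : δ = 0 := by
  simpa [← push_comp] using congrArg (ξ.push c (inv f)) h

lemma eq_zero_of_pull_eq_zero {a c c' : C} (g : c' ⟶ c) [IsIso g] {δ : ξ.Ext c a}
    (h : ξ.pull a g δ = 0) : δ = 0 := by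
  simpa [← pull_comp] using congrArg (ξ.pull a (inv g)) h

section Triangles

variable {a b c : C} {x : a ⟶ b} {y : b ⟶ c} {δ : ξ.Ext c a}

lemma comp_eq_zero (h : ξ.real x y δ) : x ≫ y = 0 := by
  obtain ⟨m, hm₁, hm₂⟩ := ξ.real_lift (𝟙 a) (0 : c ⟶ c) (ξ.real_zero a c) h
    (by simpa [pull] using (ξ.pull_zero_hom a δ).symm)
  rw [← Category.id_comp x, ← hm₁, Category.assoc, hm₂]
  simp

lemma eq_zero_iff_isSplitEpi (h : ξ.real x y δ) : δ = 0 ↔ IsSplitEpi y := by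
  constructor
  · rintro rfl
    obtain ⟨e, -, he⟩ := ξ.real_unique (ξ.real_zero a c) h
    exact .mk' ⟨biprod.inr ≫ e.hom, by rw [Category.assoc, he, biprod.inr_snd]⟩
  · intro
    obtain ⟨f, -, hf⟩ := ξ.et3op (𝟙 c) (biprod.desc x (section_ y)) (ξ.real_zero a c) h
      (by apply biprod.hom_ext' <;> simp [ξ.comp_eq_zero h])
    simpa [pull] using hf.symm

lemma eq_zero_iff_isSplitMono (h : ξ.real x y δ) : δ = 0 ↔ IsSplitMono x := by
  constructor
  · rintro rfl
    obtain ⟨e, he, -⟩ := ξ.real_unique (ξ.real_zero a c) h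
    exact .mk' ⟨e.inv ≫ biprod.fst, by rw [← he, Category.assoc, e.hom_inv_id_assoc,
      biprod.inl_fst]⟩
  · intro
    obtain ⟨g, -, hg⟩ := ξ.et3 (𝟙 a) (biprod.lift (retraction x) y) h (ξ.real_zero a c)
      (by apply biprod.hom_ext <;> simp [ξ.comp_eq_zero h])
    simpa [push] using hg

lemma pull_eq_zero_of_real (h : ξ.real x y δ) : ξ.pull a y δ = 0 := by
  obtain ⟨g, hg, hδ⟩ := ξ.et3 (𝟙 a) (biprod.desc x (𝟙 b)) (ξ.real_zero a b) h (by simp)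
  obtain rfl : g = y := by simpa using (biprod.inr : b ⟶ a ⊞ b) ≫= hg
  simpa [push, pull] using hδ.symm

lemma push_eq_zero_of_real (h : ξ.real x y δ) : ξ.push c x δ = 0 := by
  obtain ⟨f, hf, hδ⟩ := ξ.et3op (𝟙 c) (biprod.lift (𝟙 b) y) h (ξ.real_zero b c) (by simp)
  obtain rfl : f = x := by simpa using (hf =≫ biprod.fst).symm
  simpa [push, pull] using hδ

lemma exists_push_eq_of_pull_eq_zero (h : ξ.real x y δ) {z : C} (ε : ξ.Ext c z)
    (hε : ξ.pull z y ε = 0) : ∃ f : a ⟶ z, ξ.push c f δ = ε := by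
  obtain ⟨_, x', y', hr⟩ := ξ.real_exists ε
  obtain ⟨m, -, hm⟩ := ξ.real_lift (𝟙 z) y (ξ.real_zero z b) hr
    (by simpa [push, pull] using hε.symm)
  obtain ⟨f, -, hf⟩ := ξ.et3op (𝟙 c) (biprod.inr ≫ m) h hr (by simp [hm])
  exact ⟨f, by simpa [push, pull] using hf⟩

lemma exists_pull_eq_of_push_eq_zero (h : ξ.real x y δ) {z : C} (ε : ξ.Ext z a)
    (hε : ξ.push z x ε = 0) : ∃ g : z ⟶ c, ξ.pull a g δ = ε := by
  obtain ⟨_, x', y', hr⟩ := ξ.real_exists ε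
  obtain ⟨m, hm, -⟩ := ξ.real_lift x (𝟙 z) hr (ξ.real_zero b z) (by simpa [push, pull] using hε)
  obtain ⟨g, -, hg⟩ := ξ.et3 (𝟙 a) (m ≫ biprod.fst) hr h (by simp [reassoc_of% hm])
  exact ⟨g, by simpa [push, pull] using hg.symm⟩

lemma real_graph (r : a ⟶ c) : ξ.real (biprod.lift (𝟙 a) r) (biprod.desc (-r) (𝟙 c)) 0 :=
  ξ.real_congr (Biprod.unipotentUpper r) (by ext <;> simp [Biprod.ofComponents])
    (by ext <;> simp [Biprod.ofComponents]) (ξ.real_zero a c)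

end Triangles

lemma isIso_of_push_eq_self {c a : C} [IsLocalRing (End a)] (h : a ⟶ a) {δ : ξ.Ext c a}
    (hδ : δ ≠ 0) (hh : ξ.push c h δ = δ) : IsIso h := by
  rcases IsLocalRing.isUnit_or_isUnit_of_add_one (R := End a) (add_sub_cancel h (𝟙 a)) with hu | hu
  · exact (isUnit_iff_isIso _).1 hu
  · have : IsIso (𝟙 a - h) := (isUnit_iff_isIso _).1 hu
    exact absurd (ξ.eq_zero_of_push_eq_zero (𝟙 a - h) (by rw [push_sub, push_id, hh, sub_self]))
      hδ

lemma isIso_of_pull_eq_self {a c : C} [IsLocalRing (End c)] (h : c ⟶ c) {δ : ξ.Ext c a}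
    (hδ : δ ≠ 0) (hh : ξ.pull a h δ = δ) : IsIso h := by
  rcases IsLocalRing.isUnit_or_isUnit_of_add_one (R := End c) (add_sub_cancel h (𝟙 c)) with hu | hu
  · exact (isUnit_iff_isIso _).1 hu
  · have : IsIso (𝟙 c - h) := (isUnit_iff_isIso _).1 hu
    exact absurd (ξ.eq_zero_of_pull_eq_zero (𝟙 c - h) (by rw [pull_sub, pull_id, hh, sub_self]))
      hδ

lemma exists_indec_push_ne_zero (hKS : IsKrullSchmidt C) {c w : C} {ρ : ξ.Ext c w}
    (hρ : ρ ≠ 0) : ∃ (z : C) (p : w ⟶ z), Indec z ∧ ξ.push c p ρ ≠ 0 := by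
  obtain ⟨n, f, hloc, ⟨φ⟩⟩ := hKS w
  by_contra! hcon
  refine hρ ?_
  calc ρ = ξ.push c (𝟙 w) ρ := (ξ.push_id c ρ).symm
    _ = ∑ i, ξ.push c (biproduct.ι f i ≫ φ.inv) (ξ.push c (φ.hom ≫ biproduct.π f i) ρ) := by
      rw [id_eq_sum_of_iso_biproduct φ, push_sum]
      simp only [push_comp]
    _ = 0 := Finset.sum_eq_zero fun i _ => by
      have := hloc i
      rw [hcon _ _ indec_of_isLocalRing_end, push_zero]

lemma exists_indec_pull_ne_zero (hKS : IsKrullSchmidt C) {a w : C} {ρ : ξ.Ext w a}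
    (hρ : ρ ≠ 0) : ∃ (z : C) (q : z ⟶ w), Indec z ∧ ξ.pull a q ρ ≠ 0 := by
  obtain ⟨n, f, hloc, ⟨φ⟩⟩ := hKS w
  by_contra! hcon
  refine hρ ?_
  calc ρ = ξ.pull a (𝟙 w) ρ := (ξ.pull_id a ρ).symm
    _ = ∑ i, ξ.pull a (φ.hom ≫ biproduct.π f i) (ξ.pull a (biproduct.ι f i ≫ φ.inv) ρ) := by
      rw [id_eq_sum_of_iso_biproduct φ, pull_sum]
      simp only [pull_comp]
    _ = 0 := Finset.sum_eq_zero fun i _ => by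
      have := hloc i
      rw [hcon _ _ indec_of_isLocalRing_end, pull_zero]

lemma exists_ne_zero_pull_eq_zero_of_ne_zero {X a b a' b' : C} [IsLocalRing (End X)]
    {x : a ⟶ b} {y : b ⟶ X} {δ : ξ.Ext X a} {x' : a' ⟶ b'} {y' : b' ⟶ X} {δ' : ξ.Ext X a'}
    (h : ξ.real x y δ) (h' : ξ.real x' y' δ') (hδ : δ ≠ 0) (hδ' : δ' ≠ 0) :
    ∃ (w : C) (ρ : ξ.Ext X w), ρ ≠ 0 ∧ ξ.pull w y ρ = 0 ∧ ξ.pull w y' ρ = 0 := by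
  obtain ⟨w, -, -, v, ρ, hρ, -⟩ := ξ.et4op (ξ.real_sum h h') (ξ.real_graph (-𝟙 X))
  rw [show biprod.map y y' ≫ biprod.desc (- -𝟙 X) (𝟙 X) = biprod.desc y y' by ext <;> simp]
    at hρ
  refine ⟨w, ρ, fun hρ₀ => ?_, ?_, ?_⟩
  · have := (ξ.eq_zero_iff_isSplitEpi hρ).1 hρ₀
    rcases isSplitEpi_or_isSplitEpi_of_biprod_desc y y' with hy | hy
    exacts [hδ ((ξ.eq_zero_iff_isSplitEpi h).2 hy), hδ' ((ξ.eq_zero_iff_isSplitEpi h').2 hy)]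
  · rw [← biprod.inl_desc y y', pull_comp, ξ.pull_eq_zero_of_real hρ, pull_zero]
  · rw [← biprod.inr_desc y y', pull_comp, ξ.pull_eq_zero_of_real hρ, pull_zero]

lemma exists_ne_zero_push_eq_zero_of_ne_zero {X a b a' b' : C} [IsLocalRing (End X)]
    {x : X ⟶ b} {y : b ⟶ a} {δ : ξ.Ext a X} {x' : X ⟶ b'} {y' : b' ⟶ a'} {δ' : ξ.Ext a' X}
    (h : ξ.real x y δ) (h' : ξ.real x' y' δ') (hδ : δ ≠ 0) (hδ' : δ' ≠ 0) :
    ∃ (w : C) (ρ : ξ.Ext w X), ρ ≠ 0 ∧ ξ.push w x ρ = 0 ∧ ξ.push w x' ρ = 0 := by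
  obtain ⟨w, -, -, v, ρ, hρ, -⟩ := ξ.et4 (ξ.real_graph (𝟙 X)) (ξ.real_sum h h')
  rw [show biprod.lift (𝟙 X) (𝟙 X) ≫ biprod.map x x' = biprod.lift x x' by ext <;> simp] at hρ
  refine ⟨w, ρ, fun hρ₀ => ?_, ?_, ?_⟩
  · have := (ξ.eq_zero_iff_isSplitMono hρ).1 hρ₀
    rcases isSplitMono_or_isSplitMono_of_biprod_lift x x' with hx | hx
    exacts [hδ ((ξ.eq_zero_iff_isSplitMono h).2 hx), hδ' ((ξ.eq_zero_iff_isSplitMono h').2 hx)]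
  · rw [← biprod.lift_fst x x', push_comp, ξ.push_eq_zero_of_real hρ, push_zero]
  · rw [← biprod.lift_snd x x', push_comp, ξ.push_eq_zero_of_real hρ, push_zero]

end ExtCat

section Order

variable {K : Type w} [Field K] {C : Type u} [Category.{v} C] [Preadditive C]
  [HasFiniteBiproducts C] {ξ : ExtCat K C} {X : C}

namespace STerm

lemma Gt.trans {s t u : STerm ξ X} (hst : s.Gt t) (htu : t.Gt u) : s.Gt u :=
  let ⟨f, hf⟩ := hst
  let ⟨g, hg⟩ := htu
  ⟨f ≫ g, by rw [ξ.push_comp, hf, hg]⟩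

lemma Gt.sim (hKS : IsKrullSchmidt C) {s t : STerm ξ X} (hst : s.Gt t) (hts : t.Gt s) :
    s.Sim t := by
  obtain ⟨f, hf⟩ := hst
  obtain ⟨g, hg⟩ := hts
  have := isLocalRing_end_of_indec hKS s.indec
  have := isLocalRing_end_of_indec hKS t.indec
  have : IsIso (f ≫ g) := ξ.isIso_of_push_eq_self _ s.nonsplit (by rw [ξ.push_comp, hf, hg])
  have : IsIso (g ≫ f) := ξ.isIso_of_push_eq_self _ t.nonsplit (by rw [ξ.push_comp, hg, hf])
  exact ⟨f, isIso_of_isIso_comp_of_isIso_comp f g, hf⟩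

lemma gt_of_pull_eq_zero {s u : STerm ξ X} (h : ξ.pull u.A s.g u.δ = 0) : s.Gt u :=
  ξ.exists_push_eq_of_pull_eq_zero s.isReal u.δ h

lemma exists_gt_and_gt (hKS : IsKrullSchmidt C) (hX : Indec X) (s t : STerm ξ X) :
    ∃ u : STerm ξ X, s.Gt u ∧ t.Gt u := by
  have := isLocalRing_end_of_indec hKS hX
  obtain ⟨w, ρ, hρ, hs, ht⟩ :=
    ξ.exists_ne_zero_pull_eq_zero_of_ne_zero s.isReal t.isReal s.nonsplit t.nonsplit
  obtain ⟨z, p, hz, hp⟩ := ξ.exists_indec_push_ne_zero hKS hρ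
  obtain ⟨b, f, g, hr⟩ := ξ.real_exists (ξ.push X p ρ)
  refine ⟨⟨z, b, f, g, _, hr, hp, hz⟩, gt_of_pull_eq_zero ?_, gt_of_pull_eq_zero ?_⟩
  · simp only [ξ.pull_push, hs, ξ.push_zero]
  · simp only [ξ.pull_push, ht, ξ.push_zero]

end STerm

namespace SPrimeTerm

lemma Gt.trans {s t u : SPrimeTerm ξ X} (hst : s.Gt t) (htu : t.Gt u) : s.Gt u :=
  let ⟨f, hf⟩ := hst
  let ⟨g, hg⟩ := htu
  ⟨g ≫ f, by rw [ξ.pull_comp, hf, hg]⟩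

lemma Gt.sim (hKS : IsKrullSchmidt C) {s t : SPrimeTerm ξ X} (hst : s.Gt t) (hts : t.Gt s) :
    s.Sim t := by
  obtain ⟨f, hf⟩ := hst
  obtain ⟨g, hg⟩ := hts
  have := isLocalRing_end_of_indec hKS s.indec
  have := isLocalRing_end_of_indec hKS t.indec
  have : IsIso (f ≫ g) := ξ.isIso_of_pull_eq_self _ t.nonsplit (by rw [ξ.pull_comp, hg, hf])
  have : IsIso (g ≫ f) := ξ.isIso_of_pull_eq_self _ s.nonsplit (by rw [ξ.pull_comp, hf, hg])
  exact ⟨f, isIso_of_isIso_comp_of_isIso_comp f g, hf⟩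

lemma gt_of_push_eq_zero {s u : SPrimeTerm ξ X} (h : ξ.push u.A s.f u.δ = 0) : s.Gt u :=
  ξ.exists_pull_eq_of_push_eq_zero s.isReal u.δ h

lemma exists_gt_and_gt (hKS : IsKrullSchmidt C) (hX : Indec X) (s t : SPrimeTerm ξ X) :
    ∃ u : SPrimeTerm ξ X, s.Gt u ∧ t.Gt u := by
  have := isLocalRing_end_of_indec hKS hX
  obtain ⟨w, ρ, hρ, hs, ht⟩ :=
    ξ.exists_ne_zero_push_eq_zero_of_ne_zero s.isReal t.isReal s.nonsplit t.nonsplit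
  obtain ⟨z, q, hz, hq⟩ := ξ.exists_indec_pull_ne_zero hKS hρ
  obtain ⟨b, f, g, hr⟩ := ξ.real_exists (ξ.pull X q ρ)
  refine ⟨⟨z, b, f, g, _, hr, hq, hz⟩, gt_of_push_eq_zero ?_, gt_of_push_eq_zero ?_⟩
  · simp only [← ξ.pull_push, hs, ξ.pull_zero]
  · simp only [← ξ.pull_push, ht, ξ.pull_zero]

end SPrimeTerm

end Order

theorem stmt1_general (K : Type w) [Field K] (C : Type u) [Category.{v} C] [Preadditive C]
    [HasFiniteBiproducts C] (hKS : IsKrullSchmidt C) (ξ : ExtCat K C)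
    (X : C) (hX : Indec X) :
    ((∀ s t : STerm ξ X, s.Gt t → t.Gt s → s.Sim t) ∧
     (∀ s t u : STerm ξ X, s.Gt t → t.Gt u → s.Gt u) ∧
     (∀ s t : STerm ξ X, ∃ u : STerm ξ X, s.Gt u ∧ t.Gt u)) ∧
    ((∀ s t : SPrimeTerm ξ X, s.Gt t → t.Gt s → s.Sim t) ∧
     (∀ s t u : SPrimeTerm ξ X, s.Gt t → t.Gt u → s.Gt u) ∧
     (∀ s t : SPrimeTerm ξ X, ∃ u : SPrimeTerm ξ X, s.Gt u ∧ t.Gt u)) :=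
  ⟨⟨fun _ _ => STerm.Gt.sim hKS, fun _ _ _ => STerm.Gt.trans, STerm.exists_gt_and_gt hKS hX⟩,
    ⟨fun _ _ => SPrimeTerm.Gt.sim hKS, fun _ _ _ => SPrimeTerm.Gt.trans,
      SPrimeTerm.exists_gt_and_gt hKS hX⟩⟩

theorem stmt1 (K : Type w) [Field K] (C : Type u) [Category.{v} C] [Preadditive C]
    [Linear K C] [HasFiniteBiproducts C] (hKS : IsKrullSchmidt C) (ξ : ExtCat K C)
    (homFin : ∀ X Y : C, FiniteDimensional K (X ⟶ Y))
    (extFin : ∀ X Y : C, FiniteDimensional K (ξ.Ext X Y))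
    (X : C) (hX : Indec X) :
    ((∀ s t : STerm ξ X, s.Gt t → t.Gt s → s.Sim t) ∧
     (∀ s t u : STerm ξ X, s.Gt t → t.Gt u → s.Gt u) ∧
     (∀ s t : STerm ξ X, ∃ u : STerm ξ X, s.Gt u ∧ t.Gt u)) ∧
    ((∀ s t : SPrimeTerm ξ X, s.Gt t → t.Gt s → s.Sim t) ∧
     (∀ s t u : SPrimeTerm ξ X, s.Gt t → t.Gt u → s.Gt u) ∧
     (∀ s t : SPrimeTerm ξ X, ∃ u : SPrimeTerm ξ X, s.Gt u ∧ t.Gt u)) :=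
  stmt1_general K C hKS ξ X hX
end
end

section
/- Let C be a locally finite, Krull-Schmidt, K-linear extriangulated category (K a field) with dim_K Hom_C(X,Y) < ∞ and dim_K E(X,Y) < ∞ for all X,Y ∈ C. Then for any object A ∈ C there is a positive integer n such that rad^n(−, A) = 0, and a positive integer m such that rad^m(A, −) = 0, where rad(−,−) denotes the radical of the category C. -/
open CategoryTheory CategoryTheory.Limits Opposite ZeroObject

attribute [local instance] CategoryTheory.Limits.hasBinaryBiproducts_of_finite_biproducts

universe w v u

noncomputable section

/-- A morphism lies in the Jacobson radical of the category: `f ∈ rad(A, B)` iff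
`𝟙 A - f ≫ g` is invertible for every `g : B ⟶ A`. -/
def IsRadMor {C : Type u} [Category.{v} C] [Preadditive C] {A B : C} (f : A ⟶ B) : Prop :=
  ∀ g : B ⟶ A, IsIso (𝟙 A - f ≫ g)

/-- `RadComp n A B φ` says that `φ : A ⟶ B` is a composite of `n` radical morphisms.
Thus `rad^n(A, B) = 0` precisely when every such composite vanishes. -/
inductive RadComp {C : Type u} [Category.{v} C] [Preadditive C] :
    ℕ → ∀ (A B : C), (A ⟶ B) → Prop
  | single {A B : C} (f : A ⟶ B) : IsRadMor f → RadComp 1 A B f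
  | comp {n : ℕ} {A M B : C} (f : A ⟶ M) (g : M ⟶ B) :
      IsRadMor f → RadComp n M B g → RadComp (n + 1) A B (f ≫ g)

/-!
Write `A ≅ ⨁ Aⱼ` with local summands and let `G` be the sum of the finitely many indecomposables
admitting a nonzero map to some `Aⱼ`. By Krull–Schmidt, every object `X` has an endomorphism `e`,
a sum of maps factoring through `G`, with `e ≫ ψ = ψ` for all `ψ : X ⟶ A`. Inserting such maps
between consecutive factors rewrites a composite of `n` radical maps ending in `A` as a sum of maps
`X ⟶ G ⟶ G ⟶ A` whose middle factor lies in `J ^ n`, where `J` is the Jacobson radical of the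
finite-dimensional algebra `End G`. As `J` is nilpotent, `rad^n(-, A) = 0` for large `n`; the
statement for `rad^n(A, -)` is dual.
-/

theorem Ideal.mul_pow_le_pow_succ {R : Type*} [Ring R] (I : Ideal R) [I.IsTwoSided] (c : ℕ) :
    I * I ^ c ≤ I ^ (c + 1) := by
  rcases c with _ | c
  · rw [Submodule.pow_zero, Submodule.pow_one]
    exact Ideal.mul_le_left
  · exact (Submodule.pow_succ' I c.succ_ne_zero).ge

theorem IsArtinianRing.exists_pos_jacobson_pow_eq_bot (R : Type*) [Ring R] [IsArtinianRing R] :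
    ∃ t, 0 < t ∧ Ring.jacobson R ^ t = ⊥ := by
  obtain ⟨t, ht⟩ := IsArtinianRing.isNilpotent_jacobson_bot (R := R)
  refine ⟨t + 1, t.succ_pos, ?_⟩
  rw [Submodule.pow_succ, ← Ideal.jacobson_bot, ht, Submodule.zero_eq_bot, Submodule.bot_mul]

section Radical

variable {C : Type u} [Category.{v} C] [Preadditive C]

theorem isIso_id_sub_comp_comm {X Y : C} (a : X ⟶ Y) (b : Y ⟶ X) [IsIso (𝟙 X - a ≫ b)] :
    IsIso (𝟙 Y - b ≫ a) := by
  set u := inv (𝟙 X - a ≫ b)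
  have hu₁ : u - a ≫ b ≫ u = 𝟙 X := by
    have := IsIso.hom_inv_id (𝟙 X - a ≫ b)
    rwa [Preadditive.sub_comp, Category.id_comp, Category.assoc] at this
  have hu₂ : u - u ≫ a ≫ b = 𝟙 X := by
    have := IsIso.inv_hom_id (𝟙 X - a ≫ b)
    rwa [Preadditive.comp_sub, Category.comp_id] at this
  refine ⟨𝟙 Y + b ≫ u ≫ a, ?_, ?_⟩
  · calc (𝟙 Y - b ≫ a) ≫ (𝟙 Y + b ≫ u ≫ a) = 𝟙 Y - b ≫ a + b ≫ (u - a ≫ b ≫ u) ≫ a := by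
          simp only [Preadditive.comp_add, Preadditive.sub_comp, Preadditive.comp_sub,
            Category.id_comp, Category.comp_id, Category.assoc]
      _ = 𝟙 Y := by rw [hu₁]; simp
  · calc (𝟙 Y + b ≫ u ≫ a) ≫ (𝟙 Y - b ≫ a) = 𝟙 Y - b ≫ a + b ≫ (u - u ≫ a ≫ b) ≫ a := by
          simp only [Preadditive.comp_sub, Preadditive.add_comp, Preadditive.sub_comp,
            Category.id_comp, Category.comp_id, Category.assoc]
          abel
      _ = 𝟙 Y := by rw [hu₂]; simp

theorem IsRadMor.postcomp {X Y Z : C} {f : X ⟶ Y} (hf : IsRadMor f) (v : Y ⟶ Z) :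
    IsRadMor (f ≫ v) := fun g => by
  simpa using hf (v ≫ g)

theorem IsRadMor.precomp {X Y Z : C} {f : Y ⟶ Z} (hf : IsRadMor f) (u : X ⟶ Y) :
    IsRadMor (u ≫ f) := fun g => by
  have : IsIso (𝟙 Y - (f ≫ g) ≫ u) := by simpa using hf (g ≫ u)
  simpa using isIso_id_sub_comp_comm (f ≫ g) u

theorem IsRadMor.mem_jacobson {G : C} {x : End G} (hx : IsRadMor (x : G ⟶ G)) :
    x ∈ Ring.jacobson (End G) := by
  rw [← Ideal.jacobson_bot, Ideal.mem_jacobson_iff]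
  intro y
  have hunit : IsUnit (1 + y * x) := by
    have := hx (-y)
    rw [Preadditive.comp_neg, sub_neg_eq_add] at this
    exact (isUnit_iff_isIso _).2 this
  obtain ⟨z, hz⟩ := hunit.exists_left_inv
  exact ⟨z, by rw [Ideal.mem_bot, ← hz]; noncomm_ring⟩

end Radical

section FactorThrough

variable {C : Type u} [Category.{v} C] [Preadditive C]

theorem comp_comp_mem_of_mem_closure {X Y Z W : C} {S : Set (X ⟶ Y)} {T : Set (Z ⟶ W)}
    (U : AddSubgroup (X ⟶ W)) (f : Y ⟶ Z) (h : ∀ a ∈ S, ∀ b ∈ T, a ≫ f ≫ b ∈ U)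
    {a : X ⟶ Y} {b : Z ⟶ W} (ha : a ∈ AddSubgroup.closure S) (hb : b ∈ AddSubgroup.closure T) :
    a ≫ f ≫ b ∈ U := by
  refine (AddSubgroup.closure_le (U.comap (Preadditive.rightComp X (f ≫ b)))).2
    (fun a' ha' => ?_) ha
  have : (a' ≫ f) ≫ b ∈ U :=
    (AddSubgroup.closure_le (U.comap (Preadditive.leftComp W (a' ≫ f)))).2
      (fun b' hb' => show (a' ≫ f) ≫ b' ∈ U by simpa using h a' ha' b' hb') hb
  show a' ≫ f ≫ b ∈ U
  simpa using this

variable (G : C)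

def factorThrough (I : Set (End G)) (X Y : C) : AddSubgroup (X ⟶ Y) :=
  AddSubgroup.closure {φ | ∃ (s : X ⟶ G) (y : End G) (t : G ⟶ Y), y ∈ I ∧ φ = s ≫ y ≫ t}

variable {G}

theorem factorThrough_mono {I I' : Set (End G)} (h : I ⊆ I') {X Y : C} :
    factorThrough G I X Y ≤ factorThrough G I' X Y :=
  AddSubgroup.closure_mono fun _ ⟨s, y, t, hy, hφ⟩ => ⟨s, y, t, h hy, hφ⟩

theorem eq_zero_of_mem_factorThrough {I : Set (End G)} (hI : ∀ y ∈ I, y = 0) {X Y : C}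
    {φ : X ⟶ Y} (hφ : φ ∈ factorThrough G I X Y) : φ = 0 := by
  refine (AddSubgroup.mem_bot).1 ((AddSubgroup.closure_le ⊥).2 ?_ hφ)
  rintro _ ⟨s, y, t, hy, rfl⟩
  simp [hI y hy]

end FactorThrough

section Cover

variable {C : Type u} [Category.{v} C] [Preadditive C]

/- `factorThrough G {1} X Y` consists of the maps `X ⟶ Y` factoring through a finite direct sum
of copies of `G`. -/
def CoversHomsInto (G A : C) : Prop :=
  ∀ X : C, ∃ e ∈ factorThrough G {1} X X, ∀ ψ : X ⟶ A, e ≫ ψ = ψ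

def CoversHomsFrom (G A : C) : Prop :=
  ∀ X : C, ∃ e ∈ factorThrough G {1} X X, ∀ ψ : A ⟶ X, ψ ≫ e = ψ

variable {G A : C}

theorem IsRadMor.comp_comp_mem_jacobson {X Y : C} {f : X ⟶ Y} (hf : IsRadMor f) (t : G ⟶ X)
    (s : Y ⟶ G) : (t ≫ f ≫ s : End G) ∈ Ring.jacobson (End G) :=
  ((hf.postcomp s).precomp t).mem_jacobson

theorem factorThrough_one_le_pow_zero (I : Ideal (End G)) (X Y : C) :
    factorThrough G {1} X Y ≤ factorThrough G (I ^ 0 : Ideal (End G)) X Y :=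
  factorThrough_mono (Set.singleton_subset_iff.2 (Submodule.one_le.1 le_rfl))

namespace CoversHomsInto

variable (hG : CoversHomsInto G A)
include hG

theorem id_mem : 𝟙 A ∈ factorThrough G {1} A A := by
  obtain ⟨e, he, hid⟩ := hG A
  rwa [← Category.comp_id e, hid] at he

theorem comp_mem {X M : C} {f : X ⟶ M} (hf : IsRadMor f) {c : ℕ} {p : M ⟶ A}
    (hp : p ∈ factorThrough G (Ring.jacobson (End G) ^ c : Ideal (End G)) M A) :
    f ≫ p ∈ factorThrough G (Ring.jacobson (End G) ^ (c + 1) : Ideal (End G)) X A := by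
  obtain ⟨e, he, hid⟩ := hG X
  rw [← hid (f ≫ p)]
  refine comp_comp_mem_of_mem_closure _ f ?_ he hp
  rintro _ ⟨s, _, t, rfl, rfl⟩ _ ⟨s', y, w, hy, rfl⟩
  refine AddSubgroup.subset_closure ⟨s, y * (show End G from t ≫ f ≫ s'), w,
    Ideal.mul_mem_mul hy (hf.comp_comp_mem_jacobson t s'), ?_⟩
  simp [End.one_def, End.mul_def]

theorem comp_mem_of_radComp {n : ℕ} {X M : C} {g : X ⟶ M} (hg : RadComp n X M g) {c : ℕ}
    {p : M ⟶ A} (hp : p ∈ factorThrough G (Ring.jacobson (End G) ^ c : Ideal (End G)) M A) :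
    g ≫ p ∈ factorThrough G (Ring.jacobson (End G) ^ (c + n) : Ideal (End G)) X A := by
  induction hg with
  | single f hf => exact hG.comp_mem hf hp
  | comp f g hf _ ih => rw [Category.assoc, ← add_assoc]; exact hG.comp_mem hf (ih hp)

theorem radComp_eq_zero {t : ℕ} (ht : Ring.jacobson (End G) ^ t = ⊥) {X : C} {φ : X ⟶ A}
    (hφ : RadComp t X A φ) : φ = 0 := by
  have := hG.comp_mem_of_radComp hφ (factorThrough_one_le_pow_zero _ A A hG.id_mem)
  rw [zero_add, ht, Category.comp_id] at this
  exact eq_zero_of_mem_factorThrough (fun y hy => (Submodule.mem_bot _).1 hy) this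

end CoversHomsInto

namespace CoversHomsFrom

variable (hG : CoversHomsFrom G A)
include hG

theorem id_mem : 𝟙 A ∈ factorThrough G {1} A A := by
  obtain ⟨e, he, hid⟩ := hG A
  rwa [← Category.id_comp e, hid] at he

theorem comp_mem {X M : C} {f : M ⟶ X} (hf : IsRadMor f) {c : ℕ} {p : A ⟶ M}
    (hp : p ∈ factorThrough G (Ring.jacobson (End G) ^ c : Ideal (End G)) A M) :
    p ≫ f ∈ factorThrough G (Ring.jacobson (End G) ^ (c + 1) : Ideal (End G)) A X := by
  obtain ⟨e, he, hid⟩ := hG X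
  rw [← hid (p ≫ f), Category.assoc]
  refine comp_comp_mem_of_mem_closure _ f ?_ hp he
  rintro _ ⟨s', y, w, hy, rfl⟩ _ ⟨s, _, t, rfl, rfl⟩
  refine AddSubgroup.subset_closure ⟨s', (show End G from w ≫ f ≫ s) * y, t,
    Ideal.mul_pow_le_pow_succ _ c (Ideal.mul_mem_mul (hf.comp_comp_mem_jacobson w s) hy), ?_⟩
  simp [End.one_def, End.mul_def]

theorem comp_mem_of_radComp {n : ℕ} {X M : C} {g : M ⟶ X} (hg : RadComp n M X g) {c : ℕ}
    {p : A ⟶ M} (hp : p ∈ factorThrough G (Ring.jacobson (End G) ^ c : Ideal (End G)) A M) :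
    p ≫ g ∈ factorThrough G (Ring.jacobson (End G) ^ (c + n) : Ideal (End G)) A X := by
  induction hg generalizing c with
  | single f hf => exact hG.comp_mem hf hp
  | comp f g hf _ ih =>
    have := ih (hG.comp_mem hf hp)
    rwa [Category.assoc, Nat.add_right_comm, add_assoc] at this

theorem radComp_eq_zero {t : ℕ} (ht : Ring.jacobson (End G) ^ t = ⊥) {X : C} {φ : A ⟶ X}
    (hφ : RadComp t A X φ) : φ = 0 := by
  have := hG.comp_mem_of_radComp hφ (factorThrough_one_le_pow_zero _ A A hG.id_mem)
  rw [zero_add, ht, Category.id_comp] at this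
  exact eq_zero_of_mem_factorThrough (fun y hy => (Submodule.mem_bot _).1 hy) this

end CoversHomsFrom

end Cover

section KrullSchmidt

variable {C : Type u} [Category.{v} C] [Preadditive C] [HasFiniteBiproducts C]

theorem indec_of_isLocalRing {Y : C} (hY : IsLocalRing (End Y)) : Indec Y := by
  refine ⟨fun h => one_ne_zero (show (1 : End Y) = 0 from h.eq_of_src _ _), fun P Q ⟨e⟩ => ?_⟩
  let p : End Y := e.hom ≫ biprod.fst ≫ biprod.inl ≫ e.inv
  let q : End Y := e.hom ≫ biprod.snd ≫ biprod.inr ≫ e.inv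
  have hpq : p + q = 1 := by
    show e.hom ≫ biprod.fst ≫ biprod.inl ≫ e.inv + e.hom ≫ biprod.snd ≫ biprod.inr ≫ e.inv = 𝟙 Y
    rw [← Preadditive.comp_add, ← Category.assoc biprod.fst, ← Category.assoc biprod.snd,
      ← Preadditive.add_comp, biprod.total, Category.id_comp, e.hom_inv_id]
  have hpq₀ : p * q = 0 := by simp [p, q, End.mul_def]
  have hqp₀ : q * p = 0 := by simp [p, q, End.mul_def]
  rcases hY.isUnit_or_isUnit_of_add_one hpq with hp | hq
  · right
    rw [IsZero.iff_id_eq_zero]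
    calc 𝟙 Q = biprod.inr ≫ e.inv ≫ (q : Y ⟶ Y) ≫ e.hom ≫ biprod.snd := by simp [q]
      _ = 0 := by rw [hp.mul_right_eq_zero.1 hpq₀]; simp
  · left
    rw [IsZero.iff_id_eq_zero]
    calc 𝟙 P = biprod.inl ≫ e.inv ≫ (p : Y ⟶ Y) ≫ e.hom ≫ biprod.fst := by simp [p]
      _ = 0 := by rw [hq.mul_right_eq_zero.1 hqp₀]; simp

theorem exists_retract_of_hom_to_ne_zero (hKS : IsKrullSchmidt C) (hLF : LocFinite C) (A : C) :
    ∃ G : C, ∀ Y : C, IsLocalRing (End Y) → (∃ χ : Y ⟶ A, χ ≠ 0) → Nonempty (Retract Y G) := by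
  obtain ⟨a, f, hloc, ⟨hA⟩⟩ := hKS A
  choose n ind hind using fun j => (hLF (f j) (indec_of_isLocalRing (hloc j))).2
  let F : (Σ j, Fin (n j)) → C := fun p => ind p.1 p.2
  refine ⟨⨁ F, fun Y hY ⟨χ, hχ⟩ => ?_⟩
  obtain ⟨j, hj⟩ : ∃ j, χ ≫ hA.hom ≫ biproduct.π f j ≠ 0 := by
    by_contra! h
    exact hχ ((cancel_mono hA.hom).1 (biproduct.hom_ext _ _ (by simpa using h)))
  obtain ⟨i, ⟨e⟩⟩ := hind j Y (indec_of_isLocalRing hY) ⟨_, hj⟩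
  exact ⟨⟨e.hom ≫ biproduct.ι F ⟨j, i⟩, biproduct.π F ⟨j, i⟩ ≫ e.inv, by simp⟩⟩

theorem exists_retract_of_hom_from_ne_zero (hKS : IsKrullSchmidt C) (hLF : LocFinite C) (A : C) :
    ∃ G : C, ∀ Y : C, IsLocalRing (End Y) → (∃ χ : A ⟶ Y, χ ≠ 0) → Nonempty (Retract Y G) := by
  obtain ⟨a, f, hloc, ⟨hA⟩⟩ := hKS A
  choose n ind hind using fun j => (hLF (f j) (indec_of_isLocalRing (hloc j))).1
  let F : (Σ j, Fin (n j)) → C := fun p => ind p.1 p.2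
  refine ⟨⨁ F, fun Y hY ⟨χ, hχ⟩ => ?_⟩
  obtain ⟨j, hj⟩ : ∃ j, biproduct.ι f j ≫ hA.inv ≫ χ ≠ 0 := by
    by_contra! h
    exact hχ ((cancel_epi hA.inv).1 (biproduct.hom_ext' _ _ (by simpa using h)))
  obtain ⟨i, ⟨e⟩⟩ := hind j Y (indec_of_isLocalRing hY) ⟨_, hj⟩
  exact ⟨⟨e.hom ≫ biproduct.ι F ⟨j, i⟩, biproduct.π F ⟨j, i⟩ ≫ e.inv, by simp⟩⟩

theorem coversHomsInto_of_retract (hKS : IsKrullSchmidt C) {G A : C}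
    (hG : ∀ Y : C, IsLocalRing (End Y) → (∃ χ : Y ⟶ A, χ ≠ 0) → Nonempty (Retract Y G)) :
    CoversHomsInto G A := by
  intro X
  obtain ⟨n, f, hloc, ⟨e⟩⟩ := hKS X
  have key : ∀ i, ∃ (s : f i ⟶ G) (t : G ⟶ f i), ∀ χ : f i ⟶ A, s ≫ t ≫ χ = χ := by
    intro i
    by_cases h : ∀ χ : f i ⟶ A, χ = 0
    · exact ⟨0, 0, fun χ => by simp [h χ]⟩
    · obtain ⟨r⟩ := hG _ (hloc i) (not_forall.1 h)
      exact ⟨r.i, r.r, fun χ => by simp⟩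
  choose s t hst using key
  refine ⟨∑ i, (e.hom ≫ biproduct.π f i ≫ s i) ≫ (1 : End G) ≫ (t i ≫ biproduct.ι f i ≫ e.inv),
    AddSubgroup.sum_mem _ fun i _ => AddSubgroup.subset_closure ⟨_, 1, _, rfl, rfl⟩, fun ψ => ?_⟩
  calc _ = ∑ i, e.hom ≫ biproduct.π f i ≫ s i ≫ t i ≫ (biproduct.ι f i ≫ e.inv ≫ ψ) := by
        simp [Preadditive.sum_comp, End.one_def]
    _ = e.hom ≫ (∑ i, biproduct.π f i ≫ biproduct.ι f i) ≫ e.inv ≫ ψ := by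
        simp only [hst, Preadditive.comp_sum, Preadditive.sum_comp, Category.assoc]
    _ = ψ := by simp

theorem coversHomsFrom_of_retract (hKS : IsKrullSchmidt C) {G A : C}
    (hG : ∀ Y : C, IsLocalRing (End Y) → (∃ χ : A ⟶ Y, χ ≠ 0) → Nonempty (Retract Y G)) :
    CoversHomsFrom G A := by
  intro X
  obtain ⟨n, f, hloc, ⟨e⟩⟩ := hKS X
  have key : ∀ i, ∃ (s : f i ⟶ G) (t : G ⟶ f i), ∀ χ : A ⟶ f i, χ ≫ s ≫ t = χ := by
    intro i
    by_cases h : ∀ χ : A ⟶ f i, χ = 0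
    · exact ⟨0, 0, fun χ => by simp [h χ]⟩
    · obtain ⟨r⟩ := hG _ (hloc i) (not_forall.1 h)
      exact ⟨r.i, r.r, fun χ => by simp⟩
  choose s t hst using key
  refine ⟨∑ i, (e.hom ≫ biproduct.π f i ≫ s i) ≫ (1 : End G) ≫ (t i ≫ biproduct.ι f i ≫ e.inv),
    AddSubgroup.sum_mem _ fun i _ => AddSubgroup.subset_closure ⟨_, 1, _, rfl, rfl⟩, fun ψ => ?_⟩
  calc _ = ∑ i, (ψ ≫ e.hom ≫ biproduct.π f i) ≫ s i ≫ t i ≫ biproduct.ι f i ≫ e.inv := by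
        simp [Preadditive.comp_sum, End.one_def]
    _ = ψ ≫ e.hom ≫ (∑ i, biproduct.π f i ≫ biproduct.ι f i) ≫ e.inv := by
        simp only [reassoc_of% hst, Preadditive.comp_sum, Preadditive.sum_comp, Category.assoc]
    _ = ψ := by simp

end KrullSchmidt

theorem stmt4_general (K : Type w) [Field K] (C : Type u) [Category.{v} C] [Preadditive C]
    [Linear K C] [HasFiniteBiproducts C] (hKS : IsKrullSchmidt C)
    (homFin : ∀ X Y : C, FiniteDimensional K (X ⟶ Y))
    (hLF : LocFinite C) (A : C) :
    (∃ n : ℕ, 0 < n ∧ ∀ (X : C) (φ : X ⟶ A), RadComp n X A φ → φ = 0) ∧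
    (∃ m : ℕ, 0 < m ∧ ∀ (X : C) (φ : A ⟶ X), RadComp m A X φ → φ = 0) := by
  have jacobson_nilpotent (G : C) : ∃ t, 0 < t ∧ Ring.jacobson (End G) ^ t = ⊥ :=
    have : Module.Finite K (End G) := homFin G G
    have : IsArtinianRing (End G) := IsArtinianRing.of_finite K (End G)
    IsArtinianRing.exists_pos_jacobson_pow_eq_bot (End G)
  obtain ⟨G, hG⟩ := exists_retract_of_hom_to_ne_zero hKS hLF A
  obtain ⟨G', hG'⟩ := exists_retract_of_hom_from_ne_zero hKS hLF A
  obtain ⟨n, hn, hJ⟩ := jacobson_nilpotent G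
  obtain ⟨m, hm, hJ'⟩ := jacobson_nilpotent G'
  exact ⟨⟨n, hn, fun _ _ => (coversHomsInto_of_retract hKS hG).radComp_eq_zero hJ⟩,
    ⟨m, hm, fun _ _ => (coversHomsFrom_of_retract hKS hG').radComp_eq_zero hJ'⟩⟩

theorem stmt4 (K : Type w) [Field K] (C : Type u) [Category.{v} C] [Preadditive C]
    [Linear K C] [HasFiniteBiproducts C] (hKS : IsKrullSchmidt C) (ξ : ExtCat K C)
    (homFin : ∀ X Y : C, FiniteDimensional K (X ⟶ Y))
    (extFin : ∀ X Y : C, FiniteDimensional K (ξ.Ext X Y))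
    (hLF : LocFinite C) (A : C) :
    (∃ n : ℕ, 0 < n ∧ ∀ (X : C) (φ : X ⟶ A), RadComp n X A φ → φ = 0) ∧
    (∃ m : ℕ, 0 < m ∧ ∀ (X : C) (φ : A ⟶ X), RadComp m A X φ → φ = 0) :=
  stmt4_general K C hKS homFin hLF A
end
end

section
/- Let C be a Krull-Schmidt, Hom-finite, K-linear triangulated category (K a field) with a cluster tilting subcategory T, and let ψ : K_0(C,0) → K_0(C) be the canonical epimorphism. Suppose Ker(ψ) is generated by the elements [δ] = [X] + [Z] − [Y] of K_0(C,0), where δ : X → Y → Z → X[1] runs through all Auslander-Reiten triangles in C. Then C is locally finite. In particular, if T = add(T) for a cluster tilting object T ∈ C, then Ind(C) is finite. -/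
open CategoryTheory CategoryTheory.Limits Opposite ZeroObject

attribute [local instance] CategoryTheory.Limits.hasBinaryBiproducts_of_finite_biproducts

universe w v u

noncomputable section

/-- `X` is a *dense* subcategory: `add X = C`, i.e. every object of `C` is a direct summand
of an object of `X`. -/
def DenseSub {C : Type u} [Category.{v} C] [Preadditive C] [HasFiniteBiproducts C]
    (X : Set C) : Prop :=
  ∀ A : C, ∃ X₀ ∈ X, ∃ B : C, Nonempty (X₀ ≅ A ⊞ B)

/-- `X` is a full additive subcategory closed under isomorphisms (given as a set of objects). -/
def AddSub (C : Type u) [Category.{v} C] [Preadditive C] [HasFiniteBiproducts C]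
    (X : Set C) : Prop :=
  (0 : C) ∈ X ∧ (∀ {A B : C}, A ∈ X → B ∈ X → (A ⊞ B) ∈ X) ∧
    (∀ {A B : C}, A ∈ X → Nonempty (A ≅ B) → B ∈ X)

section K0ZeroDefs

variable (C : Type u) [Category.{v} C] [Preadditive C] [HasFiniteBiproducts C]

/-- The relations `[A] + [B] - [A ⊞ B]` and `[A] - [B]` for `A ≅ B`, defining `K₀(C, 0)`. -/
def relAdd : Set (FreeAbelianGroup C) :=
  {x | (∃ A B : C,
          x = FreeAbelianGroup.of A + FreeAbelianGroup.of B - FreeAbelianGroup.of (A ⊞ B)) ∨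
       (∃ A B : C, Nonempty (A ≅ B) ∧ x = FreeAbelianGroup.of A - FreeAbelianGroup.of B)}

/-- `K₀(C, 0)`: the free abelian group on the isomorphism classes of objects of `C`. -/
abbrev K0Zero := FreeAbelianGroup C ⧸ AddSubgroup.closure (relAdd C)

/-- The class `[A]` of an object `A` in `K₀(C, 0)`. -/
def clsZero (A : C) : K0Zero C := QuotientAddGroup.mk (FreeAbelianGroup.of A)

end K0ZeroDefs

open CategoryTheory.Pretriangulated

section TriDefs

variable (C : Type u) [Category.{v} C] [Preadditive C] [HasZeroObject C] [HasShift C ℤ]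
  [∀ n : ℤ, (shiftFunctor C n).Additive] [Pretriangulated C] [HasFiniteBiproducts C]

/-- `T` is a cluster tilting subcategory of the triangulated category `C`. -/
structure IsClusterTilting (T : Set C) : Prop where
  sum_mem : ∀ {X Y : C}, X ∈ T → Y ∈ T → (X ⊞ Y) ∈ T
  summand_mem : ∀ {X Y Z : C}, Z ∈ T → Nonempty (Z ≅ X ⊞ Y) → X ∈ T
  contravariantly_finite : ∀ X : C, ∃ T₀ ∈ T, ∃ f : T₀ ⟶ X,
    ∀ T₁ ∈ T, ∀ g : T₁ ⟶ X, ∃ h : T₁ ⟶ T₀, h ≫ f = g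
  covariantly_finite : ∀ X : C, ∃ T₀ ∈ T, ∃ f : X ⟶ T₀,
    ∀ T₁ ∈ T, ∀ g : X ⟶ T₁, ∃ h : T₀ ⟶ T₁, f ≫ h = g
  char_left : ∀ X : C, X ∈ T ↔ ∀ T₀ ∈ T, ∀ φ : T₀ ⟶ X⟦(1 : ℤ)⟧, φ = 0
  char_right : ∀ X : C, X ∈ T ↔ ∀ T₀ ∈ T, ∀ φ : X ⟶ T₀⟦(1 : ℤ)⟧, φ = 0

/-- `X → Y → Z → X[1]` is an Auslander–Reiten triangle: a distinguished triangle with `X, Z`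
indecomposable, first map left almost split and second map right almost split. -/
structure IsARTriangle {X Y Z : C} (f : X ⟶ Y) (g : Y ⟶ Z) (h : Z ⟶ X⟦(1 : ℤ)⟧) : Prop where
  distinguished : Triangle.mk f g h ∈ distTriang C
  indec₁ : Indec X
  indec₃ : Indec Z
  not_section : ¬ ∃ r : Y ⟶ X, f ≫ r = 𝟙 X
  left_almost_split : ∀ {X' : C} (u : X ⟶ X'), (¬ ∃ r : X' ⟶ X, u ≫ r = 𝟙 X) →
    ∃ v : Y ⟶ X', f ≫ v = u
  not_retraction : ¬ ∃ s : Z ⟶ Y, s ≫ g = 𝟙 Z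
  right_almost_split : ∀ {W : C} (u : W ⟶ Z), (¬ ∃ s : Z ⟶ W, s ≫ u = 𝟙 Z) →
    ∃ v : W ⟶ Y, v ≫ g = u

/-- The shifted subcategory `T[1]` (closed under isomorphisms). -/
def shiftSet (T : Set C) : Set C := {W | ∃ t ∈ T, Nonempty (W ≅ t⟦(1 : ℤ)⟧)}

/-- `h` factors through an object of `T[1]`. -/
def FactorsThruShift (T : Set C) {Z X : C} (h : Z ⟶ X⟦(1 : ℤ)⟧) : Prop :=
  ∃ t ∈ T, ∃ (u : Z ⟶ t⟦(1 : ℤ)⟧) (v : t⟦(1 : ℤ)⟧ ⟶ X⟦(1 : ℤ)⟧), u ≫ v = h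

/-- The set of elements `[X] + [Z] - [Y]` of `K₀(C, 0)` for all distinguished triangles. -/
def triRel : Set (K0Zero C) :=
  {x | ∃ T : Triangle C, T ∈ (distTriang C) ∧
        x = clsZero C T.obj₁ + clsZero C T.obj₃ - clsZero C T.obj₂}

/-- The Grothendieck group `K₀(C)` of the triangulated category `C`. -/
abbrev K0Tri := K0Zero C ⧸ AddSubgroup.closure (triRel C)

/-- The canonical epimorphism `ψ : K₀(C, 0) → K₀(C)`. -/
def psiTri : K0Zero C →+ K0Tri C := QuotientAddGroup.mk' _

/-- The class `[A]` of an object `A` in `K₀(C)`. -/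
def k0clsTri (A : C) : K0Tri C := psiTri C (clsZero C A)

/-- The relations `[X] + [Z] - [Y]` for triangles `X → Y → Z --h--> X[1]` with `h` factoring
through an object of `T[1]`. -/
def relTriRel (T : Set C) : Set (K0Zero C) :=
  {x | ∃ Tr : Triangle C, Tr ∈ (distTriang C) ∧ FactorsThruShift C T Tr.mor₃ ∧
        x = clsZero C Tr.obj₁ + clsZero C Tr.obj₃ - clsZero C Tr.obj₂}

/-- The relative Grothendieck group `K₀(C, T)`. -/
abbrev K0RelTri (T : Set C) := K0Zero C ⧸ AddSubgroup.closure (relTriRel C T)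

/-- The canonical projection `g : K₀(C, 0) → K₀(C, T)`. -/
def gProj (T : Set C) : K0Zero C →+ K0RelTri C T := QuotientAddGroup.mk' _

/-- The set of elements `[δ] = [X] + [Z] - [Y]` of `K₀(C, 0)` arising from Auslander–Reiten
triangles `X → Y → Z → X[1]`; for the AR triangle starting at `X` this is `[l_X]`. -/
def arRelTri : Set (K0Zero C) :=
  {x | ∃ (X Y Z : C) (f : X ⟶ Y) (g : Y ⟶ Z) (h : Z ⟶ X⟦(1 : ℤ)⟧),
        IsARTriangle C f g h ∧ x = clsZero C X + clsZero C Z - clsZero C Y}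

/-- The set of elements `[l_X]` for `X ∈ Ind(C) \ T[1]`. -/
def arRelTriOff (T : Set C) : Set (K0Zero C) :=
  {x | ∃ (X Y Z : C) (f : X ⟶ Y) (g : Y ⟶ Z) (h : Z ⟶ X⟦(1 : ℤ)⟧),
        IsARTriangle C f g h ∧ X ∉ shiftSet C T ∧
        x = clsZero C X + clsZero C Z - clsZero C Y}

/-- `C` has Auslander–Reiten triangles: every indecomposable `X` admits an Auslander–Reiten
triangle `X → Y → τ⁻¹X → X[1]`. -/
def HasARTriangles : Prop :=
  ∀ X : C, Indec X →
    ∃ (Y Z : C) (f : X ⟶ Y) (g : Y ⟶ Z) (h : Z ⟶ X⟦(1 : ℤ)⟧), IsARTriangle C f g h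

/-- `add T₀`: the objects isomorphic to direct summands of finite direct sums of copies
of `T₀`. -/
def addSet (T₀ : C) : Set C :=
  {X | ∃ (n : ℕ) (Y : C), Nonempty ((⨁ fun _ : Fin n => T₀) ≅ X ⊞ Y)}

/-- `Ind(C)` is finite: there are finitely many indecomposables up to isomorphism. -/
def FinitelyManyIndec : Prop :=
  ∃ (n : ℕ) (ind : Fin n → C), ∀ X : C, Indec X → ∃ i, Nonempty (X ≅ ind i)

end TriDefs

/-!
For an indecomposable `B`, the functionals `[W] ↦ dim Hom(W, B)` and `[W] ↦ dim Hom(B, W)` on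
`K₀(C, 0)` vanish on the relation `[X] + [Z] - [Y]` of an Auslander–Reiten triangle
`X → Y → Z → X[1]` unless `B ≅ X` or `B ≅ X[1]` (resp. `B ≅ Z` or `B ≅ Z[-1]`): otherwise the
almost split property makes `Hom(-, B)` (resp. `Hom(B, -)`) short exact on the triangle.
If the AR relations generate `Ker ψ`, then `[A] + [A[1]]`, the relation of the triangle
`A → 0 → A[1] → A[1]`, is a finite combination of them, so only finitely many indecomposables
`B` have `dim Hom(A, B) + dim Hom(A[1], B) ≠ 0`, and dually.
For a cluster tilting object `T₀`, every indecomposable `X` has `Hom(T₀, X) ≠ 0` or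
`Hom(T₀, X[1]) ≠ 0`, because `Hom(T₀, X[1]) = 0` forces `X ∈ add T₀`.
-/

section FiniteUpToIso

variable {C : Type u} [Category.{v} C]

def FiniteUpToIso (S : Set C) : Prop :=
  ∃ F : Set C, F.Finite ∧ ∀ B ∈ S, ∃ A ∈ F, Nonempty (B ≅ A)

namespace FiniteUpToIso

variable {S S' : Set C}

lemma empty : FiniteUpToIso (∅ : Set C) :=
  ⟨∅, Set.finite_empty, fun _ h => h.elim⟩

lemma subset (h : FiniteUpToIso S') (hS : S ⊆ S') : FiniteUpToIso S :=
  let ⟨F, hF, hS'⟩ := h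
  ⟨F, hF, fun B hB => hS' B (hS hB)⟩

lemma union (h : FiniteUpToIso S) (h' : FiniteUpToIso S') : FiniteUpToIso (S ∪ S') := by
  obtain ⟨F, hF, hS⟩ := h
  obtain ⟨F', hF', hS'⟩ := h'
  refine ⟨F ∪ F', hF.union hF', ?_⟩
  rintro B (hB | hB)
  · obtain ⟨A, hA, e⟩ := hS B hB
    exact ⟨A, Or.inl hA, e⟩
  · obtain ⟨A, hA, e⟩ := hS' B hB
    exact ⟨A, Or.inr hA, e⟩

lemma preimage_equivalence {D : Type*} [Category D] (E : C ≌ D) {S : Set D}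
    (h : FiniteUpToIso S) : FiniteUpToIso (E.functor.obj ⁻¹' S) := by
  obtain ⟨F, hF, hS⟩ := h
  refine ⟨E.inverse.obj '' F, hF.image _, fun B hB => ?_⟩
  obtain ⟨A, hA, ⟨e⟩⟩ := hS _ hB
  exact ⟨_, Set.mem_image_of_mem _ hA, ⟨E.unitIso.app B ≪≫ E.inverse.mapIso e⟩⟩

lemma exists_fin (h : FiniteUpToIso S) :
    ∃ (n : ℕ) (ind : Fin n → C), ∀ B ∈ S, ∃ i, Nonempty (B ≅ ind i) := by
  obtain ⟨F, hF, hS⟩ := h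
  obtain ⟨n, ind, hind⟩ := hF.fin_embedding
  refine ⟨n, ind, fun B hB => ?_⟩
  obtain ⟨A, hA, e⟩ := hS B hB
  obtain ⟨i, rfl⟩ : A ∈ Set.range ind := hind ▸ hA
  exact ⟨i, e⟩

end FiniteUpToIso

lemma finiteUpToIso_support_of_mem_closure {M N : Type*} [AddGroup M] [AddGroup N]
    (P : C → Prop) (ev : C → M →+ N) {s : Set M}
    (hs : ∀ y ∈ s, FiniteUpToIso {B | P B ∧ ev B y ≠ 0}) {x : M}
    (hx : x ∈ AddSubgroup.closure s) : FiniteUpToIso {B | P B ∧ ev B x ≠ 0} := by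
  induction hx using AddSubgroup.closure_induction with
  | mem y hy => exact hs y hy
  | zero => exact FiniteUpToIso.empty.subset fun B hB => hB.2 (map_zero _)
  | add a b _ _ iha ihb =>
    refine (iha.union ihb).subset fun B ⟨hB, hne⟩ => ?_
    by_cases ha : ev B a = 0
    · exact Or.inr ⟨hB, by rwa [map_add, ha, zero_add] at hne⟩
    · exact Or.inl ⟨hB, ha⟩
  | neg a _ ih => exact ih.subset fun B ⟨hB, hne⟩ => ⟨hB, by simpa using hne⟩

end FiniteUpToIso

section AlmostSplit

variable {C : Type u} [Category.{v} C] {D : Type*} [Category D]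

def LeftAlmostSplit {X Y : C} (f : X ⟶ Y) : Prop :=
  ∀ (W : C) (u : X ⟶ W), (¬ ∃ r : W ⟶ X, u ≫ r = 𝟙 X) → ∃ v : Y ⟶ W, f ≫ v = u

def RightAlmostSplit {Y Z : C} (g : Y ⟶ Z) : Prop :=
  ∀ (W : C) (u : W ⟶ Z), (¬ ∃ s : Z ⟶ W, s ≫ u = 𝟙 Z) → ∃ v : W ⟶ Y, v ≫ g = u

lemma LeftAlmostSplit.map_equivalence (E : C ≌ D) {X Y : C} {f : X ⟶ Y}
    (hf : LeftAlmostSplit f) : LeftAlmostSplit (E.functor.map f) := by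
  intro W u hu
  obtain ⟨v, hv⟩ := hf _ (E.unit.app X ≫ E.inverse.map u) fun ⟨r, hr⟩ =>
    hu ⟨E.counitInv.app W ≫ E.functor.map r, by simpa using congrArg E.functor.map hr⟩
  exact ⟨E.functor.map v ≫ E.counit.app W, by simp [← Functor.map_comp_assoc, hv]⟩

lemma RightAlmostSplit.map_equivalence (E : C ≌ D) {Y Z : C} {g : Y ⟶ Z}
    (hg : RightAlmostSplit g) : RightAlmostSplit (E.functor.map g) := by
  intro W u hu
  obtain ⟨v, hv⟩ := hg _ (E.inverse.map u ≫ E.unitInv.app Z) fun ⟨s, hs⟩ =>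
    hu ⟨E.functor.map s ≫ E.counit.app W, by simpa using congrArg E.functor.map hs⟩
  refine ⟨E.counitInv.app W ≫ E.functor.map v, ?_⟩
  rw [Category.assoc, ← Functor.map_comp, hv, Functor.map_comp]
  simp

lemma LeftAlmostSplit.shift [HasShift C ℤ] (n : ℤ) {X Y : C} {f : X ⟶ Y}
    (hf : LeftAlmostSplit f) : LeftAlmostSplit (f⟦n⟧') :=
  hf.map_equivalence (shiftEquiv C n)

lemma RightAlmostSplit.shift [HasShift C ℤ] (n : ℤ) {Y Z : C} {g : Y ⟶ Z}
    (hg : RightAlmostSplit g) : RightAlmostSplit (g⟦n⟧') :=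
  hg.map_equivalence (shiftEquiv C n)

end AlmostSplit

lemma Module.finrank_eq_add_of_exact {K U V W : Type*} [DivisionRing K] [AddCommGroup U]
    [AddCommGroup V] [AddCommGroup W] [Module K U] [Module K V] [Module K W]
    [FiniteDimensional K U] [FiniteDimensional K V] [FiniteDimensional K W]
    {f : U →ₗ[K] V} {g : V →ₗ[K] W} (hf : Function.Injective f) (hg : Function.Surjective g)
    (H : Function.Exact f g) : finrank K V = finrank K U + finrank K W := by
  have := Module.length_eq_add_of_exact f g hf hg H
  simp only [Module.length_eq_finrank] at this
  exact_mod_cast this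

section HomDim

variable {C : Type u} [Category.{v} C] [Preadditive C] [HasFiniteBiproducts C]

def K0Zero.lift {G : Type*} [AddCommGroup G] (φ : C → G)
    (hadd : ∀ X Y : C, φ (X ⊞ Y) = φ X + φ Y)
    (hiso : ∀ X Y : C, Nonempty (X ≅ Y) → φ X = φ Y) : K0Zero C →+ G :=
  QuotientAddGroup.lift _ (FreeAbelianGroup.lift φ) <| (AddSubgroup.closure_le _).2 <| by
    rintro _ (⟨X, Y, rfl⟩ | ⟨X, Y, h, rfl⟩)
    · simp [hadd]
    · simp [hiso _ _ h]

@[simp]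
lemma K0Zero.lift_clsZero {G : Type*} [AddCommGroup G] (φ : C → G)
    (hadd : ∀ X Y : C, φ (X ⊞ Y) = φ X + φ Y)
    (hiso : ∀ X Y : C, Nonempty (X ≅ Y) → φ X = φ Y) (X : C) :
    K0Zero.lift φ hadd hiso (clsZero C X) = φ X :=
  FreeAbelianGroup.lift_apply_of φ X

def suppHomFrom (A : C) : Set C := {B | Indec B ∧ ∃ φ : A ⟶ B, φ ≠ 0}

def suppHomTo (A : C) : Set C := {B | Indec B ∧ ∃ φ : B ⟶ A, φ ≠ 0}

lemma locFinite_of_finiteUpToIso (h : ∀ A : C, FiniteUpToIso (suppHomFrom A))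
    (h' : ∀ A : C, FiniteUpToIso (suppHomTo A)) : LocFinite C := by
  refine fun A _ => ⟨?_, ?_⟩
  · obtain ⟨n, ind, hind⟩ := (h A).exists_fin
    exact ⟨n, ind, fun B hB hφ => hind B ⟨hB, hφ⟩⟩
  · obtain ⟨n, ind, hind⟩ := (h' A).exists_fin
    exact ⟨n, ind, fun B hB hφ => hind B ⟨hB, hφ⟩⟩

variable (K : Type w) [Field K] [Linear K C] [∀ X Y : C, FiniteDimensional K (X ⟶ Y)]

lemma finrank_biprod_hom (X₁ X₂ B : C) :
    Module.finrank K (X₁ ⊞ X₂ ⟶ B) = Module.finrank K (X₁ ⟶ B) + Module.finrank K (X₂ ⟶ B) := by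
  let e : (X₁ ⊞ X₂ ⟶ B) ≃ₗ[K] (X₁ ⟶ B) × (X₂ ⟶ B) :=
    { toFun := fun u => (biprod.inl ≫ u, biprod.inr ≫ u)
      map_add' := by simp
      map_smul' := by simp
      invFun := fun p => biprod.desc p.1 p.2
      left_inv := fun u => by ext <;> simp
      right_inv := fun p => by simp }
  rw [e.finrank_eq, Module.finrank_prod]

lemma finrank_hom_biprod (B X₁ X₂ : C) :
    Module.finrank K (B ⟶ X₁ ⊞ X₂) = Module.finrank K (B ⟶ X₁) + Module.finrank K (B ⟶ X₂) := by
  let e : (B ⟶ X₁ ⊞ X₂) ≃ₗ[K] (B ⟶ X₁) × (B ⟶ X₂) :=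
    { toFun := fun u => (u ≫ biprod.fst, u ≫ biprod.snd)
      map_add' := by simp
      map_smul' := by simp
      invFun := fun p => biprod.lift p.1 p.2
      left_inv := fun u => by ext <;> simp
      right_inv := fun p => by simp }
  rw [e.finrank_eq, Module.finrank_prod]

def homDimTo (B : C) : K0Zero C →+ ℤ :=
  K0Zero.lift (fun W => (Module.finrank K (W ⟶ B) : ℤ))
    (fun X Y => by simp [finrank_biprod_hom])
    (fun X Y ⟨e⟩ => by rw [(Linear.homCongr K e (Iso.refl B)).finrank_eq])

def homDimFrom (B : C) : K0Zero C →+ ℤ :=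
  K0Zero.lift (fun W => (Module.finrank K (B ⟶ W) : ℤ))
    (fun X Y => by simp [finrank_hom_biprod])
    (fun X Y ⟨e⟩ => by rw [(Linear.homCongr K (Iso.refl B) e).finrank_eq])

@[simp]
lemma homDimTo_clsZero (B W : C) : homDimTo K B (clsZero C W) = Module.finrank K (W ⟶ B) :=
  K0Zero.lift_clsZero ..

@[simp]
lemma homDimFrom_clsZero (B W : C) : homDimFrom K B (clsZero C W) = Module.finrank K (B ⟶ W) :=
  K0Zero.lift_clsZero ..

end HomDim

lemma Indec.map_equivalence {C : Type u} [Category.{v} C] [Preadditive C] [HasFiniteBiproducts C]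
    {D : Type*} [Category D] [Preadditive D] [HasFiniteBiproducts D] (E : C ≌ D)
    [E.functor.Additive] {X : C} (hX : Indec X) : Indec (E.functor.obj X) := by
  refine ⟨fun hz => hX.1 ((E.inverse.map_isZero hz).of_iso (E.unitIso.app X)), ?_⟩
  rintro Y Z ⟨i⟩
  have := preservesBinaryBiproducts_of_preservesBiproducts E.inverse
  have j : X ≅ E.inverse.obj Y ⊞ E.inverse.obj Z :=
    E.unitIso.app X ≪≫ E.inverse.mapIso i ≪≫ E.inverse.mapBiprod Y Z
  exact (hX.2 _ _ ⟨j⟩).imp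
    (fun hz => (E.functor.map_isZero hz).of_iso (E.counitIso.app Y).symm)
    (fun hz => (E.functor.map_isZero hz).of_iso (E.counitIso.app Z).symm)

lemma Indec.shift {C : Type u} [Category.{v} C] [Preadditive C] [HasFiniteBiproducts C]
    [HasShift C ℤ] [∀ n : ℤ, (shiftFunctor C n).Additive] (n : ℤ) {X : C} (hX : Indec X) :
    Indec (X⟦n⟧) :=
  have : (shiftEquiv C n).functor.Additive := inferInstanceAs (shiftFunctor C n).Additive
  hX.map_equivalence (shiftEquiv C n)

section Triangulated

variable {C : Type u} [Category.{v} C] [Preadditive C] [HasZeroObject C] [HasShift C ℤ]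
  [∀ n : ℤ, (shiftFunctor C n).Additive] [Pretriangulated C]

section Linear

variable (K : Type w) [Field K] [Linear K C]

lemma exact_leftComp_of_distTriang {T : Triangle C} (hT : T ∈ distTriang C) (B : C) :
    Function.Exact (Linear.leftComp K B T.mor₂) (Linear.leftComp K B T.mor₁) := fun y =>
  ⟨fun hy => (Triangle.yoneda_exact₂ _ hT y hy).imp fun _ h => h.symm,
    by rintro ⟨z, rfl⟩; simp [comp_distTriang_mor_zero₁₂_assoc _ hT]⟩

lemma exact_rightComp_of_distTriang {T : Triangle C} (hT : T ∈ distTriang C) (B : C) :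
    Function.Exact (Linear.rightComp K B T.mor₁) (Linear.rightComp K B T.mor₂) := fun y =>
  ⟨fun hy => (Triangle.coyoneda_exact₂ _ hT y hy).imp fun _ h => h.symm,
    by rintro ⟨z, rfl⟩; simp [comp_distTriang_mor_zero₁₂ _ hT]⟩

end Linear

variable [HasFiniteBiproducts C]

lemma Indec.nonempty_iso_of_retract {B X : C} (hB : Indec B) (hX : ¬ IsZero X) (u : X ⟶ B)
    (r : B ⟶ X) (hur : u ≫ r = 𝟙 X) : Nonempty (B ≅ X) := by
  obtain ⟨Q, p, w, hT⟩ := distinguished_cocone_triangle u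
  have : IsSplitMono u := .mk' ⟨r, hur⟩
  have hw : w = 0 := (Triangle.mor₃_eq_zero_iff_mono₁ _ hT).2 (inferInstanceAs (Mono u))
  obtain ⟨e, -⟩ := exists_iso_binaryBiproduct_of_distTriang _ hT hw
  exact ⟨e ≪≫ (isoBiprodZero ((hB.2 _ _ ⟨e⟩).resolve_left hX)).symm⟩

namespace IsARTriangle

variable {X Y Z : C} {f : X ⟶ Y} {g : Y ⟶ Z} {h : Z ⟶ X⟦(1 : ℤ)⟧}
  (hAR : IsARTriangle C f g h)
include hAR

lemma leftAlmostSplit : LeftAlmostSplit f := fun _ => hAR.left_almost_split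

lemma rightAlmostSplit : RightAlmostSplit g := fun _ => hAR.right_almost_split

variable {B : C} (hB : Indec B)
include hB

lemma exists_comp_eq_left (hX : ¬ Nonempty (B ≅ X)) (u : X ⟶ B) : ∃ v : Y ⟶ B, f ≫ v = u := by
  by_cases hs : ∃ r : B ⟶ X, u ≫ r = 𝟙 X
  · obtain ⟨r, hr⟩ := hs
    exact (hX (hB.nonempty_iso_of_retract hAR.indec₁.1 u r hr)).elim
  · exact hAR.left_almost_split u hs

lemma exists_comp_eq_right (hZ : ¬ Nonempty (B ≅ Z)) (u : B ⟶ Z) : ∃ v : B ⟶ Y, v ≫ g = u := by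
  by_cases hs : ∃ s : Z ⟶ B, s ≫ u = 𝟙 Z
  · obtain ⟨s, hs⟩ := hs
    exact (hZ (hB.nonempty_iso_of_retract hAR.indec₃.1 s u hs)).elim
  · exact hAR.right_almost_split u hs

lemma eq_zero_of_comp_eq_zero_left (hX : ¬ Nonempty (B ≅ X⟦(1 : ℤ)⟧)) (v : Z ⟶ B)
    (hv : g ≫ v = 0) : v = 0 := by
  obtain ⟨b, rfl⟩ : ∃ b : X⟦(1 : ℤ)⟧ ⟶ B, v = h ≫ b :=
    Triangle.yoneda_exact₃ _ hAR.distinguished v hv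
  by_cases hs : ∃ r : B ⟶ X⟦(1 : ℤ)⟧, b ≫ r = 𝟙 _
  · obtain ⟨r, hr⟩ := hs
    exact (hX (hB.nonempty_iso_of_retract (hAR.indec₁.shift 1).1 b r hr)).elim
  · obtain ⟨v', rfl⟩ := hAR.leftAlmostSplit.shift 1 _ b hs
    have : h ≫ f⟦(1 : ℤ)⟧' = 0 := comp_distTriang_mor_zero₃₁ _ hAR.distinguished
    rw [reassoc_of% this, zero_comp]

lemma eq_zero_of_comp_eq_zero_right (hZ : ¬ Nonempty (B ≅ Z⟦(-1 : ℤ)⟧)) (v : B ⟶ X)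
    (hv : v ≫ f = 0) : v = 0 := by
  -- the morphism `Z[-1] ⟶ X` is the first one of the inverse rotation of the triangle
  obtain ⟨b, rfl⟩ : ∃ b : B ⟶ Z⟦(-1 : ℤ)⟧,
      v = b ≫ (-h⟦(-1 : ℤ)⟧' ≫ (shiftEquiv C (1 : ℤ)).unitIso.inv.app X) :=
    Triangle.coyoneda_exact₂ _ (inv_rot_of_distTriang _ hAR.distinguished) v hv
  by_cases hs : ∃ s : Z⟦(-1 : ℤ)⟧ ⟶ B, s ≫ b = 𝟙 _
  · obtain ⟨s, hs⟩ := hs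
    exact (hZ (hB.nonempty_iso_of_retract (hAR.indec₃.shift (-1)).1 s b hs)).elim
  · obtain ⟨v', rfl⟩ := hAR.rightAlmostSplit.shift (-1) _ b hs
    have : g ≫ h = 0 := comp_distTriang_mor_zero₂₃ _ hAR.distinguished
    simp [← Functor.map_comp_assoc, this]

variable (K : Type w) [Field K] [Linear K C] [∀ X Y : C, FiniteDimensional K (X ⟶ Y)]

lemma homDimTo_eq_zero (hX : ¬ Nonempty (B ≅ X)) (hX₁ : ¬ Nonempty (B ≅ X⟦(1 : ℤ)⟧)) :
    homDimTo K B (clsZero C X + clsZero C Z - clsZero C Y) = 0 := by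
  have : Module.finrank K (Y ⟶ B) = Module.finrank K (Z ⟶ B) + Module.finrank K (X ⟶ B) :=
    Module.finrank_eq_add_of_exact (f := Linear.leftComp K B g) (g := Linear.leftComp K B f)
      ((injective_iff_map_eq_zero _).2 (hAR.eq_zero_of_comp_eq_zero_left hB hX₁))
      (hAR.exists_comp_eq_left hB hX) (exact_leftComp_of_distTriang K hAR.distinguished B)
  simp only [map_sub, map_add, homDimTo_clsZero, this]
  push_cast
  ring

lemma homDimFrom_eq_zero (hZ : ¬ Nonempty (B ≅ Z)) (hZ₁ : ¬ Nonempty (B ≅ Z⟦(-1 : ℤ)⟧)) :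
    homDimFrom K B (clsZero C X + clsZero C Z - clsZero C Y) = 0 := by
  have : Module.finrank K (B ⟶ Y) = Module.finrank K (B ⟶ X) + Module.finrank K (B ⟶ Z) :=
    Module.finrank_eq_add_of_exact (f := Linear.rightComp K B f) (g := Linear.rightComp K B g)
      ((injective_iff_map_eq_zero _).2 (hAR.eq_zero_of_comp_eq_zero_right hB hZ₁))
      (hAR.exists_comp_eq_right hB hZ) (exact_rightComp_of_distTriang K hAR.distinguished B)
  simp only [map_sub, map_add, homDimFrom_clsZero, this]
  push_cast
  ring

end IsARTriangle

lemma clsZero_add_clsZero_shift_mem_closure_triRel (A : C) :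
    clsZero C A + clsZero C (A⟦(1 : ℤ)⟧) ∈ AddSubgroup.closure (triRel C) := by
  have h₀ : clsZero C (0 : C) ∈ triRel C :=
    ⟨contractibleTriangle 0, contractible_distinguished _, (add_sub_cancel_right _ _).symm⟩
  have hA : clsZero C A + clsZero C (A⟦(1 : ℤ)⟧) - clsZero C 0 ∈ triRel C :=
    ⟨(contractibleTriangle A).rotate, rot_of_distTriang _ (contractible_distinguished A), rfl⟩
  simpa using
    add_mem (AddSubgroup.subset_closure hA) (AddSubgroup.subset_closure h₀)

section HomFinite

variable (K : Type w) [Field K] [Linear K C] [∀ X Y : C, FiniteDimensional K (X ⟶ Y)]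

lemma finiteUpToIso_support_homDimTo_of_mem_arRelTri {y : K0Zero C} (hy : y ∈ arRelTri C) :
    FiniteUpToIso {B | Indec B ∧ homDimTo K B y ≠ 0} := by
  obtain ⟨X, Y, Z, f, g, h, hAR, rfl⟩ := hy
  refine ⟨{X, X⟦(1 : ℤ)⟧}, Set.toFinite _, fun B ⟨hB, hne⟩ => ?_⟩
  by_cases hX : Nonempty (B ≅ X)
  · exact ⟨X, .inl rfl, hX⟩
  by_cases hX₁ : Nonempty (B ≅ X⟦(1 : ℤ)⟧)
  · exact ⟨_, .inr rfl, hX₁⟩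
  exact (hne (hAR.homDimTo_eq_zero hB K hX hX₁)).elim

lemma finiteUpToIso_support_homDimFrom_of_mem_arRelTri {y : K0Zero C} (hy : y ∈ arRelTri C) :
    FiniteUpToIso {B | Indec B ∧ homDimFrom K B y ≠ 0} := by
  obtain ⟨X, Y, Z, f, g, h, hAR, rfl⟩ := hy
  refine ⟨{Z, Z⟦(-1 : ℤ)⟧}, Set.toFinite _, fun B ⟨hB, hne⟩ => ?_⟩
  by_cases hZ : Nonempty (B ≅ Z)
  · exact ⟨Z, .inl rfl, hZ⟩
  by_cases hZ₁ : Nonempty (B ≅ Z⟦(-1 : ℤ)⟧)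
  · exact ⟨_, .inr rfl, hZ₁⟩
  exact (hne (hAR.homDimFrom_eq_zero hB K hZ hZ₁)).elim

end HomFinite

lemma finiteUpToIso_suppHomFrom (K : Type w) [Field K] [Linear K C]
    [∀ X Y : C, FiniteDimensional K (X ⟶ Y)]
    (hrel : AddSubgroup.closure (triRel C) ≤ AddSubgroup.closure (arRelTri C)) (A : C) :
    FiniteUpToIso (suppHomFrom A) := by
  refine (finiteUpToIso_support_of_mem_closure Indec (homDimTo K)
    (fun _ => finiteUpToIso_support_homDimTo_of_mem_arRelTri K)
    (hrel (clsZero_add_clsZero_shift_mem_closure_triRel A))).subset ?_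
  rintro B ⟨hB, φ, hφ⟩
  have : 0 < Module.finrank K (A ⟶ B) := Module.finrank_pos_iff_exists_ne_zero.2 ⟨φ, hφ⟩
  refine ⟨hB, ?_⟩
  simp only [map_add, homDimTo_clsZero]
  omega

lemma finiteUpToIso_suppHomTo (K : Type w) [Field K] [Linear K C]
    [∀ X Y : C, FiniteDimensional K (X ⟶ Y)]
    (hrel : AddSubgroup.closure (triRel C) ≤ AddSubgroup.closure (arRelTri C)) (A : C) :
    FiniteUpToIso (suppHomTo A) := by
  refine (finiteUpToIso_support_of_mem_closure Indec (homDimFrom K)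
    (fun _ => finiteUpToIso_support_homDimFrom_of_mem_arRelTri K)
    (hrel (clsZero_add_clsZero_shift_mem_closure_triRel A))).subset ?_
  rintro B ⟨hB, φ, hφ⟩
  have : 0 < Module.finrank K (B ⟶ A) := Module.finrank_pos_iff_exists_ne_zero.2 ⟨φ, hφ⟩
  refine ⟨hB, ?_⟩
  simp only [map_add, homDimFrom_clsZero]
  omega

end Triangulated

section ClusterTilting

variable {C : Type u} [Category.{v} C] [Preadditive C] [HasFiniteBiproducts C]

lemma eq_zero_of_mem_addSet {T₀ W X : C} (h : ∀ φ : T₀ ⟶ W, φ = 0) (hX : X ∈ addSet C T₀)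
    (φ : X ⟶ W) : φ = 0 := by
  obtain ⟨n, Y, ⟨e⟩⟩ := hX
  have : e.hom ≫ biprod.fst ≫ φ = 0 :=
    biproduct.hom_ext' _ _ fun i => by rw [comp_zero]; exact h _
  simpa using congrArg (biprod.inl ≫ e.inv ≫ ·) this

lemma finitelyManyIndec_of_isClusterTilting_addSet [HasShift C ℤ]
    [∀ n : ℤ, (shiftFunctor C n).Additive] {T₀ : C}
    (hT : IsClusterTilting C (addSet C T₀)) (hfin : FiniteUpToIso (suppHomFrom T₀)) :
    FinitelyManyIndec C := by
  obtain ⟨n, ind, hind⟩ :=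
    (hfin.union (hfin.preimage_equivalence (shiftEquiv C (1 : ℤ)))).exists_fin
  refine ⟨n, ind, fun X hX => hind X ?_⟩
  by_cases hX₁ : ∀ φ : T₀ ⟶ X⟦(1 : ℤ)⟧, φ = 0
  · have hXT : X ∈ addSet C T₀ :=
      (hT.char_left X).2 fun _ hT' => eq_zero_of_mem_addSet hX₁ hT'
    refine Or.inl ⟨hX, ?_⟩
    by_contra! h
    exact hX.1 ((IsZero.iff_id_eq_zero X).2 (eq_zero_of_mem_addSet h hXT _))
  · exact Or.inr ⟨hX.shift 1, not_forall.1 hX₁⟩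

end ClusterTilting

theorem stmt7 (C : Type u) [Category.{v} C] [Preadditive C] [HasZeroObject C] [HasShift C ℤ]
    [∀ n : ℤ, (shiftFunctor C n).Additive] [Pretriangulated C] [HasFiniteBiproducts C]
    (hKS : IsKrullSchmidt C) (K : Type w) [Field K] [Linear K C]
    (homFin : ∀ X Y : C, FiniteDimensional K (X ⟶ Y))
    (T : Set C) (hT : IsClusterTilting C T)
    (hker : (psiTri C).ker = AddSubgroup.closure (arRelTri C)) :
    LocFinite C ∧ (∀ T₀ : C, T = addSet C T₀ → FinitelyManyIndec C) := by
  have := homFin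
  have hrel : AddSubgroup.closure (triRel C) ≤ AddSubgroup.closure (arRelTri C) :=
    hker ▸ (QuotientAddGroup.ker_mk' _).ge
  refine ⟨locFinite_of_finiteUpToIso (finiteUpToIso_suppHomFrom K hrel)
    (finiteUpToIso_suppHomTo K hrel), ?_⟩
  rintro T₀ rfl
  exact finitelyManyIndec_of_isClusterTilting_addSet hT (finiteUpToIso_suppHomFrom K hrel T₀)
end
end

section
/- Let C be a Krull-Schmidt, Hom-finite, K-linear triangulated category (K a field) with a cluster tilting subcategory T, and let X → Y --g--> τ^{-1}X --h--> X[1] be an Auslander-Reiten triangle in C. Then X ∉ T[1] if and only if h factors through an object of T[1]. -/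
open CategoryTheory CategoryTheory.Limits Opposite ZeroObject

attribute [local instance] CategoryTheory.Limits.hasBinaryBiproducts_of_finite_biproducts

universe w v u

noncomputable section

open CategoryTheory.Pretriangulated

/-! The connecting map `h` is nonzero, as `g` is not a retraction, and it factors through
`φ[1]` for every nonzero `φ : t ⟶ X`. The objects of `T[1]` are exactly those receiving no
nonzero map from `T`: so if `X ∉ T[1]` such a `φ` exists, while if `X ∈ T[1]` every map
`t[1] ⟶ X[1]`, being the shift of a map `t ⟶ X`, vanishes, which would force `h = 0`. -/

namespace IsClusterTilting

variable {C : Type u} [Category.{v} C] [Preadditive C] [HasShift C ℤ] [HasFiniteBiproducts C]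
  {T : Set C}

theorem mem_shiftSet_iff (hT : IsClusterTilting C T) (X : C) :
    X ∈ shiftSet C T ↔ ∀ t ∈ T, ∀ φ : t ⟶ X, φ = 0 := by
  constructor
  · rintro ⟨t, ht, ⟨e⟩⟩ t' ht' φ
    exact (Preadditive.IsIso.comp_right_eq_zero φ e.hom).1 ((hT.char_left t).1 ht t' ht' _)
  · intro hX
    let e : X⟦(-1 : ℤ)⟧⟦(1 : ℤ)⟧ ≅ X := (shiftFunctorCompIsoId C (-1 : ℤ) 1 (by norm_num)).app X
    have hmem : X⟦(-1 : ℤ)⟧ ∈ T := (hT.char_left _).2 fun t ht ψ =>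
      (Preadditive.IsIso.comp_right_eq_zero ψ e.hom).1 (hX t ht _)
    exact ⟨_, hmem, ⟨e.symm⟩⟩

end IsClusterTilting

namespace IsARTriangle

variable {C : Type u} [Category.{v} C] [Preadditive C] [HasZeroObject C] [HasShift C ℤ]
  [∀ n : ℤ, (shiftFunctor C n).Additive] [Pretriangulated C] [HasFiniteBiproducts C]
  {X Y Z : C} {f : X ⟶ Y} {g : Y ⟶ Z} {h : Z ⟶ X⟦(1 : ℤ)⟧}

theorem mor₃_ne_zero (hAR : IsARTriangle C f g h) : h ≠ 0 := by
  intro h0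
  obtain ⟨s, hs⟩ := Triangle.coyoneda_exact₃ _ hAR.distinguished (𝟙 Z)
    (by subst h0; exact comp_zero)
  exact hAR.not_retraction ⟨s, hs.symm⟩

/-- Completing `p` to a triangle `A → X --q--> W → A[1]`, the map `q` is not a split
monomorphism since `p ≫ q = 0`, so it factors through `f`; hence `h ≫ q[1] = 0`. -/
theorem exists_comp_shift_map_eq_mor₃ (hAR : IsARTriangle C f g h) {A : C} (p : A ⟶ X)
    (hp : p ≠ 0) : ∃ b : Z ⟶ A⟦(1 : ℤ)⟧, b ≫ p⟦(1 : ℤ)⟧' = h := by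
  obtain ⟨W, q, r, hdist⟩ := distinguished_cocone_triangle p
  have hpq : p ≫ q = 0 := comp_distTriang_mor_zero₁₂ _ hdist
  have hq : ¬ ∃ ρ : W ⟶ X, q ≫ ρ = 𝟙 X := by
    rintro ⟨ρ, hρ⟩
    apply hp
    calc p = p ≫ q ≫ ρ := by rw [hρ, Category.comp_id]
      _ = 0 := by rw [← Category.assoc, hpq, zero_comp]
  obtain ⟨ψ, hψ⟩ := hAR.left_almost_split q hq
  have hhf : h ≫ f⟦(1 : ℤ)⟧' = 0 := comp_distTriang_mor_zero₃₁ _ hAR.distinguished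
  have hhq : h ≫ q⟦(1 : ℤ)⟧' = 0 := by
    rw [← hψ, Functor.map_comp, ← Category.assoc, hhf, zero_comp]
  obtain ⟨b, hb⟩ := Triangle.coyoneda_exact₁ _ (rot_of_distTriang _ hdist) h hhq
  refine ⟨-b, ?_⟩
  rw [hb]
  exact (Preadditive.neg_comp b _).trans (Preadditive.comp_neg b _).symm

end IsARTriangle

theorem stmt8 (C : Type u) [Category.{v} C] [Preadditive C] [HasZeroObject C] [HasShift C ℤ]
    [∀ n : ℤ, (shiftFunctor C n).Additive] [Pretriangulated C] [HasFiniteBiproducts C]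
    (hKS : IsKrullSchmidt C) (K : Type w) [Field K] [Linear K C]
    (homFin : ∀ X Y : C, FiniteDimensional K (X ⟶ Y))
    (T : Set C) (hT : IsClusterTilting C T)
    (X Y Z : C) (f : X ⟶ Y) (g : Y ⟶ Z) (h : Z ⟶ X⟦(1 : ℤ)⟧)
    (hAR : IsARTriangle C f g h) :
    X ∉ shiftSet C T ↔ FactorsThruShift C T h := by
  rw [hT.mem_shiftSet_iff]
  constructor
  · intro hX
    obtain ⟨t, ht, φ, hφ⟩ : ∃ t ∈ T, ∃ φ : t ⟶ X, φ ≠ 0 := by simpa using hX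
    obtain ⟨b, hb⟩ := hAR.exists_comp_shift_map_eq_mor₃ φ hφ
    exact ⟨t, ht, b, _, hb⟩
  · rintro ⟨t, ht, u, v, rfl⟩ hX
    have hv : v = 0 := by
      rw [← Functor.map_preimage (shiftFunctor C (1 : ℤ)) v, hX t ht (Functor.preimage _ v),
        Functor.map_zero]
    exact hAR.mor₃_ne_zero (by rw [hv, comp_zero])
end
end
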